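/- arXiv:2211.12743 — 9 statements merged into one kernel-verified Lean document; each statement's English description precedes it below -/
import Mathlib

section
/- Let Z be a square-integrable real-valued random variable on a probability space and let z ∈ ℝ be such that P[Z > z] ≤ 1/2 and P[Z ≥ z] > 0. Then z − √(Var(Z)/P[Z ≥ z]) ≤ E[Z] ≤ z + √(2·Var(Z)). -/
open MeasureTheory ProbabilityTheory

/-! Both bounds are one-sided Chebyshev estimates. If `E[Z] < z`, every `ω` with `z ≤ Z ω` deviates
from the mean by at least `z - E[Z]`, so `P[Z ≥ z] (z - E[Z])² ≤ Var(Z)`. If `z < E[Z]`, the same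
argument applied to `-Z` on the event `{Z ≤ z}`, whose probability is at least `1/2` because
`P[Z > z] ≤ 1/2`, gives `(E[Z] - z)² / 2 ≤ Var(Z)`. -/

namespace ProbabilityTheory

variable {Ω : Type*} [MeasurableSpace Ω] {μ : Measure Ω}

theorem sub_integral_le_sqrt_variance_div [IsFiniteMeasure μ] {X : Ω → ℝ} (hX : MemLp X 2 μ)
    {s : Set Ω} {a : ℝ} (ha : ∀ ω ∈ s, a ≤ X ω) (hs : 0 < μ.real s) :
    a - μ[X] ≤ √(Var[X; μ] / μ.real s) := by
  rcases le_or_gt a μ[X] with h | h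
  · linarith [Real.sqrt_nonneg (Var[X; μ] / μ.real s)]
  have hc : 0 < a - μ[X] := sub_pos.2 h
  have hsub : s ⊆ {ω | a - μ[X] ≤ |X ω - μ[X]|} := fun ω hω =>
    (sub_le_sub_right (ha ω hω) _).trans (le_abs_self _)
  have hcheb : μ.real s ≤ Var[X; μ] / (a - μ[X]) ^ 2 :=
    ENNReal.toReal_le_of_le_ofReal (div_nonneg (variance_nonneg X μ) (sq_nonneg _))
      ((measure_mono hsub).trans (meas_ge_le_variance_div_sq hX hc))
  apply Real.le_sqrt_of_sq_le
  rw [le_div_iff₀ hs]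
  rwa [le_div_iff₀ (by positivity), mul_comm] at hcheb

theorem one_le_probReal_add_probReal_compl [IsProbabilityMeasure μ] (s : Set Ω) :
    1 ≤ μ.real s + μ.real sᶜ := by
  simpa using measureReal_union_le (μ := μ) s sᶜ

end ProbabilityTheory

/-- Let `Z` be a square-integrable real random variable on a probability
space and `z : ℝ` with `P[Z > z] ≤ 1/2` and `P[Z ≥ z] > 0`. Then
`z − √(Var(Z)/P[Z ≥ z]) ≤ E[Z] ≤ z + √(2·Var(Z))`. -/
theorem stmt0 {Ω : Type*} [MeasureSpace Ω] [IsProbabilityMeasure (ℙ : Measure Ω)]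
    (Z : Ω → ℝ) (hZ : MemLp Z 2 ℙ) (z : ℝ)
    (h1 : (ℙ {ω | z < Z ω}).toReal ≤ 1 / 2)
    (h2 : 0 < (ℙ {ω | z ≤ Z ω}).toReal) :
    z - Real.sqrt (variance Z ℙ / (ℙ {ω | z ≤ Z ω}).toReal) ≤ (∫ ω, Z ω) ∧
      (∫ ω, Z ω) ≤ z + Real.sqrt (2 * variance Z ℙ) := by
  refine ⟨sub_le_comm.1 (sub_integral_le_sqrt_variance_div hZ (fun _ hω => hω) h2), ?_⟩
  have hcompl : {ω | z < Z ω}ᶜ = {ω | Z ω ≤ z} := by ext; simp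
  have hhalf : 1 / 2 ≤ (ℙ : Measure Ω).real {ω | Z ω ≤ z} := by
    have := one_le_probReal_add_probReal_compl (μ := ℙ) {ω | z < Z ω}
    rw [hcompl] at this
    linarith [show (ℙ : Measure Ω).real {ω | z < Z ω} ≤ 1 / 2 from h1]
  have hneg := sub_integral_le_sqrt_variance_div hZ.neg (s := {ω | Z ω ≤ z}) (a := -z)
    (fun _ hω => neg_le_neg hω) (by linarith)
  simp only [variance_neg, Pi.neg_apply, integral_neg] at hneg
  have hvar : variance Z ℙ / (ℙ : Measure Ω).real {ω | Z ω ≤ z} ≤ 2 * variance Z ℙ := by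
    calc variance Z ℙ / (ℙ : Measure Ω).real {ω | Z ω ≤ z} ≤ variance Z ℙ / (1 / 2) :=
          div_le_div_of_nonneg_left (variance_nonneg Z ℙ) (by norm_num) hhalf
      _ = 2 * variance Z ℙ := by ring
  linarith [Real.sqrt_le_sqrt hvar]
end

section
/- Let Z be a square-integrable real-valued random variable on a probability space. Then for every z ∈ ℝ with P[Z ≤ z] > 0 and P[Z ≥ z] > 0, one has |E[Z] − z| ≤ √( Var(Z) / min{P[Z ≤ z], P[Z ≥ z], 1/2} ). -/
/-!
Chebyshev's inequality, applied on the side of `z` away from the mean: if `E[Z] ≤ z` then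
`{Z ≥ z} ⊆ {|Z - E[Z]| ≥ z - E[Z]}`, so `(z - E[Z])² P[Z ≥ z] ≤ Var(Z)`, and symmetrically
with `{Z ≤ z}` when `z ≤ E[Z]`. Either way `(E[Z] - z)²` times the smaller of the two tail
probabilities is at most `Var(Z)`.
-/

open MeasureTheory ProbabilityTheory

namespace ProbabilityTheory

variable {Ω : Type*} [MeasurableSpace Ω] {μ : Measure Ω} [IsFiniteMeasure μ] {X : Ω → ℝ}

theorem sq_mul_toReal_measure_le_variance (hX : MemLp X 2 μ) {s : Set Ω} {c : ℝ} (hc : 0 ≤ c)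
    (hs : ∀ ω ∈ s, c ≤ |X ω - μ[X]|) : c ^ 2 * (μ s).toReal ≤ variance X μ := by
  rcases hc.eq_or_lt with rfl | hc
  · simp [variance_nonneg]
  have hchebyshev : μ s ≤ ENNReal.ofReal (variance X μ / c ^ 2) :=
    (measure_mono hs).trans (meas_ge_le_variance_div_sq hX hc)
  have hle : (μ s).toReal ≤ variance X μ / c ^ 2 :=
    ENNReal.toReal_le_of_le_ofReal (div_nonneg (variance_nonneg X μ) (sq_nonneg c)) hchebyshev
  rw [mul_comm, ← le_div_iff₀ (by positivity)]
  exact hle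

theorem sq_sub_integral_mul_min_measure_le_variance (hX : MemLp X 2 μ) (z : ℝ) :
    (μ[X] - z) ^ 2 * min (μ {ω | X ω ≤ z}).toReal (μ {ω | z ≤ X ω}).toReal ≤ variance X μ := by
  rcases le_total μ[X] z with hmean | hmean
  · have hupper := sq_mul_toReal_measure_le_variance hX (s := {ω | z ≤ X ω}) (sub_nonneg.2 hmean)
      fun ω (hω : z ≤ X ω) => by rw [abs_of_nonneg (by linarith)]; linarith
    rw [← neg_sub, neg_sq]
    exact (mul_le_mul_of_nonneg_left (min_le_right _ _) (sq_nonneg _)).trans hupper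
  · have hlower := sq_mul_toReal_measure_le_variance hX (s := {ω | X ω ≤ z}) (sub_nonneg.2 hmean)
      fun ω (hω : X ω ≤ z) => by rw [abs_of_nonpos (by linarith)]; linarith
    exact (mul_le_mul_of_nonneg_left (min_le_left _ _) (sq_nonneg _)).trans hlower

end ProbabilityTheory

/-- For a square-integrable real random variable `Z` and any `z : ℝ` with
`P[Z ≤ z] > 0` and `P[Z ≥ z] > 0`,
`|E[Z] − z| ≤ √( Var(Z) / min{P[Z ≤ z], P[Z ≥ z], 1/2} )`. -/
theorem stmt1 {Ω : Type*} [MeasureSpace Ω] [IsProbabilityMeasure (ℙ : Measure Ω)]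
    (Z : Ω → ℝ) (hZ : MemLp Z 2 ℙ) :
    ∀ z : ℝ, 0 < (ℙ {ω | Z ω ≤ z}).toReal → 0 < (ℙ {ω | z ≤ Z ω}).toReal →
      |(∫ ω, Z ω) - z| ≤
        Real.sqrt (variance Z ℙ /
          min (min (ℙ {ω | Z ω ≤ z}).toReal (ℙ {ω | z ≤ Z ω}).toReal) (1 / 2)) := by
  intro z hlower hupper
  have hmin_pos : 0 < min (min (ℙ {ω | Z ω ≤ z}).toReal (ℙ {ω | z ≤ Z ω}).toReal) (1 / 2) :=
    lt_min (lt_min hlower hupper) one_half_pos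
  refine Real.le_sqrt_of_sq_le ?_
  rw [sq_abs, le_div_iff₀ hmin_pos]
  exact (mul_le_mul_of_nonneg_left (min_le_left _ _) (sq_nonneg _)).trans
    (sq_sub_integral_mul_min_measure_le_variance hZ z)
end

section
/- Let d ≥ 1, let B be a finite nonempty index set, let β : B → [0,1] be weights with β^B := Σ_{b∈B} β_b > 0, let z : B → ℝ^d, and let B′ ⊆ B be a nonempty subset such that β_b ≥ 1/2 for every b ∈ B′. Set μ_β := Σ_{b∈B} (β_b/β^B)·z_b and μ′ := (1/|B′|)·Σ_{b∈B′} z_b. Then there exists a unit vector u ∈ ℝ^d such that Σ_{b∈B} (β_b/β^B)·⟨z_b − μ_β, u⟩² ≥ (|B′|/(2|B|))·‖μ_β − μ′‖² (equivalently, the operator norm of the weighted covariance matrix Σ_{b∈B} (β_b/β^B)(z_b − μ_β)(z_b − μ_β)ᵀ is at least (|B′|/(2|B|))·‖μ_β − μ′‖²). -/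
open scoped RealInnerProductSpace

open Finset

/-!
Let `μ` be the weighted mean, `μ'` the mean over `B'`, and `u` the unit vector along `μ' - μ`.
The projections `⟨z_b - μ, u⟩` over `B'` average to `‖μ' - μ‖`, so by Cauchy–Schwarz their
squares sum to at least `|B'| ‖μ - μ'‖²`. On `B'` the normalised weights are at least
`1 / (2|B|)`, since `β_b ≥ 1/2` and `β^B ≤ |B|`; dropping the terms outside `B'` only
decreases the weighted variance.
-/

section InnerProductSpace

variable {E : Type*} [NormedAddCommGroup E] [InnerProductSpace ℝ E]

theorem exists_norm_eq_one_inner_eq_norm [Nontrivial E] (w : E) :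
    ∃ u : E, ‖u‖ = 1 ∧ ⟪w, u⟫ = ‖w‖ := by
  rcases eq_or_ne w 0 with rfl | hw
  · obtain ⟨u, hu⟩ := exists_norm_eq E zero_le_one
    exact ⟨u, hu, by simp⟩
  · refine ⟨‖w‖⁻¹ • w, by simp [norm_smul, hw], ?_⟩
    rw [real_inner_smul_right, real_inner_self_eq_norm_sq]
    field_simp

theorem card_mul_inner_sq_le_sum_inner_sq {ι : Type*} (s : Finset ι) (y : ι → E) (c u : E) :
    #s * ⟪(#s : ℝ)⁻¹ • ∑ b ∈ s, y b - c, u⟫ ^ 2 ≤ ∑ b ∈ s, ⟪y b - c, u⟫ ^ 2 := by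
  rcases s.eq_empty_or_nonempty with rfl | hs
  · simp
  have hcard : (0 : ℝ) < #s := by exact_mod_cast hs.card_pos
  have hsum : ∑ b ∈ s, ⟪y b - c, u⟫ = #s * ⟪(#s : ℝ)⁻¹ • ∑ b ∈ s, y b - c, u⟫ := by
    rw [← sum_inner, sum_sub_distrib, sum_const, ← Nat.cast_smul_eq_nsmul ℝ, inner_sub_left,
      inner_sub_left, real_inner_smul_left, real_inner_smul_left]
    field_simp
  have hCS := sq_sum_le_card_mul_sum_sq (s := s) (f := fun b => ⟪y b - c, u⟫)
  rw [hsum] at hCS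
  nlinarith

end InnerProductSpace

theorem mul_sum_le_sum_mul_of_subset {ι : Type*} {s t : Finset ι} (hst : s ⊆ t)
    {w x : ι → ℝ} {c : ℝ} (hw : ∀ b ∈ t, 0 ≤ w b) (hc : ∀ b ∈ s, c ≤ w b)
    (hx : ∀ b ∈ t, 0 ≤ x b) :
    c * ∑ b ∈ s, x b ≤ ∑ b ∈ t, w b * x b :=
  calc c * ∑ b ∈ s, x b = ∑ b ∈ s, c * x b := mul_sum _ _ _
    _ ≤ ∑ b ∈ s, w b * x b :=
      sum_le_sum fun b hb => mul_le_mul_of_nonneg_right (hc b hb) (hx b (hst hb))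
    _ ≤ ∑ b ∈ t, w b * x b :=
      sum_le_sum_of_subset_of_nonneg hst fun b hb _ => mul_nonneg (hw b hb) (hx b hb)

theorem one_div_two_mul_card_le_div_sum {ι : Type*} {B : Finset ι} {β : ι → ℝ}
    (hβ : ∀ b ∈ B, β b ≤ 1) (hβpos : 0 < ∑ a ∈ B, β a) {b : ι} (hb : 1 / 2 ≤ β b) :
    1 / (2 * #B) ≤ β b / ∑ a ∈ B, β a := by
  have hsum_le : ∑ a ∈ B, β a ≤ #B := by
    simpa using sum_le_sum hβ
  calc 1 / (2 * #B) ≤ 1 / (2 * ∑ a ∈ B, β a) :=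
        one_div_le_one_div_of_le (by positivity) (by linarith)
    _ = (1 / 2) / ∑ a ∈ B, β a := by ring
    _ ≤ β b / ∑ a ∈ B, β a := div_le_div_of_nonneg_right hb hβpos.le

theorem stmt4_general {d : ℕ} (hd : 1 ≤ d) {ι : Type*} (B B' : Finset ι)
    (hB'B : B' ⊆ B)
    (β : ι → ℝ) (hβ : ∀ b ∈ B, 0 ≤ β b ∧ β b ≤ 1)
    (hβpos : 0 < ∑ b ∈ B, β b)
    (hhalf : ∀ b ∈ B', 1 / 2 ≤ β b)
    (z : ι → EuclideanSpace ℝ (Fin d)) :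
    ∃ u : EuclideanSpace ℝ (Fin d), ‖u‖ = 1 ∧
      ((B'.card : ℝ) / (2 * B.card)) *
          ‖(∑ b ∈ B, (β b / ∑ a ∈ B, β a) • z b) - (B'.card : ℝ)⁻¹ • ∑ b ∈ B', z b‖ ^ 2 ≤
        ∑ b ∈ B, (β b / ∑ a ∈ B, β a) *
          ⟪z b - ∑ a ∈ B, (β a / ∑ c ∈ B, β c) • z a, u⟫ ^ 2 := by
  have : Nonempty (Fin d) := ⟨⟨0, hd⟩⟩
  set μ := ∑ a ∈ B, (β a / ∑ c ∈ B, β c) • z a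
  set μ' := (#B' : ℝ)⁻¹ • ∑ b ∈ B', z b
  obtain ⟨u, hu, hμu⟩ := exists_norm_eq_one_inner_eq_norm (μ' - μ)
  refine ⟨u, hu, ?_⟩
  calc #B' / (2 * #B) * ‖μ - μ'‖ ^ 2 = 1 / (2 * #B) * (#B' * ⟪μ' - μ, u⟫ ^ 2) := by
        rw [hμu, norm_sub_rev]; ring
    _ ≤ 1 / (2 * #B) * ∑ b ∈ B', ⟪z b - μ, u⟫ ^ 2 := by
        gcongr; exact card_mul_inner_sq_le_sum_inner_sq B' z μ u
    _ ≤ _ := mul_sum_le_sum_mul_of_subset hB'B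
        (fun b hb => div_nonneg (hβ b hb).1 hβpos.le)
        (fun b hb => one_div_two_mul_card_le_div_sum (fun a ha => (hβ a ha).2) hβpos (hhalf b hb))
        (fun _ _ => sq_nonneg _)

/-- For weights `β : B → [0,1]` with positive total weight and a nonempty
`B′ ⊆ B` on which `β_b ≥ 1/2`, there is a unit vector `u` such that the weighted variance
of `⟨z_b, u⟩` is at least `(|B′|/(2|B|))·‖μ_β − μ′‖²`, where `μ_β` is the `β`-weighted mean
of `z` over `B` and `μ′` the unweighted mean over `B′`. -/
theorem stmt4 {d : ℕ} (hd : 1 ≤ d) {ι : Type*} (B B' : Finset ι)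
    (hB : B.Nonempty) (hB'B : B' ⊆ B) (hB' : B'.Nonempty)
    (β : ι → ℝ) (hβ : ∀ b ∈ B, 0 ≤ β b ∧ β b ≤ 1)
    (hβpos : 0 < ∑ b ∈ B, β b)
    (hhalf : ∀ b ∈ B', 1 / 2 ≤ β b)
    (z : ι → EuclideanSpace ℝ (Fin d)) :
    ∃ u : EuclideanSpace ℝ (Fin d), ‖u‖ = 1 ∧
      ((B'.card : ℝ) / (2 * B.card)) *
          ‖(∑ b ∈ B, (β b / ∑ a ∈ B, β a) • z b) - (B'.card : ℝ)⁻¹ • ∑ b ∈ B', z b‖ ^ 2 ≤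
        ∑ b ∈ B, (β b / ∑ a ∈ B, β a) *
          ⟪z b - ∑ a ∈ B, (β a / ∑ c ∈ B, β c) • z a, u⟫ ^ 2 :=
  stmt4_general hd B B' hB'B β hβ hβpos hhalf z
end

section
/- Let G be a finite nonempty set, z : G → ℝ^d, μ ∈ ℝ^d, and V ≥ 0. Suppose that for every unit vector u ∈ ℝ^d, (1/|G|)·Σ_{b∈G} ⟨z_b − μ, u⟩² ≤ V. Then for every nonempty subset G′ ⊆ G with |G′| ≥ |G|/2, ‖ (1/|G′|)·Σ_{b∈G′} z_b − μ ‖ ≤ √(2V). -/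
open scoped RealInnerProductSpace

/-- If for every unit vector `u` the empirical variance-type quantity
`(1/|G|)·Σ_{b∈G} ⟨z_b − μ, u⟩²` is at most `V`, then for every nonempty `G′ ⊆ G` with
`|G′| ≥ |G|/2` the mean of `z` over `G′` is within `√(2V)` of `μ`. -/
theorem stmt5 {d : ℕ} {ι : Type*} (G : Finset ι) (hG : G.Nonempty)
    (z : ι → EuclideanSpace ℝ (Fin d)) (μ : EuclideanSpace ℝ (Fin d))
    (V : ℝ) (hV : 0 ≤ V)
    (hcov : ∀ u : EuclideanSpace ℝ (Fin d), ‖u‖ = 1 →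
      (G.card : ℝ)⁻¹ * ∑ b ∈ G, ⟪z b - μ, u⟫ ^ 2 ≤ V) :
    ∀ G' : Finset ι, G' ⊆ G → G'.Nonempty → (G.card : ℝ) / 2 ≤ G'.card →
      ‖(G'.card : ℝ)⁻¹ • (∑ b ∈ G', z b) - μ‖ ≤ Real.sqrt (2 * V) := by
  intro G' hsub hne hhalf
  set n : ℝ := (G'.card : ℝ) with hn
  have hnpos : 0 < n := by
    have : 0 < G'.card := Finset.card_pos.mpr hne
    rw [hn]; exact_mod_cast this
  set w : EuclideanSpace ℝ (Fin d) := n⁻¹ • (∑ b ∈ G', z b) - μ with hw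
  by_cases hw0 : w = 0
  · rw [hw0]
    simp [Real.sqrt_nonneg]
  · set u : EuclideanSpace ℝ (Fin d) := ‖w‖⁻¹ • w with hu
    have hwnorm : (0:ℝ) < ‖w‖ := norm_pos_iff.mpr hw0
    have hunorm : ‖u‖ = 1 := by
      rw [hu, norm_smul, norm_inv, norm_norm, inv_mul_cancel₀ hwnorm.ne']
    set a : ι → ℝ := fun b => ⟪z b - μ, u⟫ with ha
    have hwsum : w = n⁻¹ • (∑ b ∈ G', (z b - μ)) := by
      rw [hw, Finset.sum_sub_distrib, smul_sub, Finset.sum_const, hn]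
      congr 1
      rw [← Nat.cast_smul_eq_nsmul ℝ, smul_smul, inv_mul_cancel₀ hnpos.ne', one_smul]
    have hinner : ⟪w, u⟫ = n⁻¹ * ∑ b ∈ G', a b := by
      rw [hwsum, real_inner_smul_left, sum_inner]
    have hinner2 : ⟪w, u⟫ = ‖w‖ := by
      rw [hu, real_inner_smul_right, real_inner_self_eq_norm_sq]
      field_simp
    have hkey : ‖w‖ = n⁻¹ * ∑ b ∈ G', a b := by rw [← hinner2, hinner]
    have hsq : ‖w‖ ^ 2 ≤ 2 * V := by
      have hCS : (∑ b ∈ G', a b) ^ 2 ≤ n * ∑ b ∈ G', (a b) ^ 2 := by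
        rw [hn]
        exact_mod_cast sq_sum_le_card_mul_sum_sq (s := G') (f := a)
      have hsub2 : ∑ b ∈ G', (a b) ^ 2 ≤ ∑ b ∈ G, (a b) ^ 2 :=
        Finset.sum_le_sum_of_subset_of_nonneg hsub (fun i _ _ => sq_nonneg _)
      have hGpos : (0:ℝ) < (G.card : ℝ) := by
        have : 0 < G.card := Finset.card_pos.mpr hG
        exact_mod_cast this
      have hV' : ∑ b ∈ G, (a b) ^ 2 ≤ (G.card : ℝ) * V := by
        have h1 := hcov u hunorm
        rw [inv_mul_le_iff₀ hGpos] at h1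
        exact h1
      have hG2 : (G.card : ℝ) ≤ 2 * n := by linarith
      have h1 : ∑ b ∈ G', (a b) ^ 2 ≤ 2 * n * V := by
        calc ∑ b ∈ G', (a b) ^ 2 ≤ (G.card : ℝ) * V := le_trans hsub2 hV'
          _ ≤ 2 * n * V := mul_le_mul_of_nonneg_right hG2 hV
      have h2 : (∑ b ∈ G', a b) ^ 2 ≤ n * (2 * n * V) :=
        hCS.trans (mul_le_mul_of_nonneg_left h1 hnpos.le)
      rw [hkey, mul_pow]
      calc n⁻¹ ^ 2 * (∑ b ∈ G', a b) ^ 2 ≤ n⁻¹ ^ 2 * (n * (2 * n * V)) :=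
            mul_le_mul_of_nonneg_left h2 (by positivity)
        _ = 2 * V := by field_simp
    have := Real.sqrt_le_sqrt hsq
    rwa [Real.sqrt_sq (norm_nonneg w)] at this
end

section
/- Consider the regression model: on a probability space, X : Ω → ℝ^d and N : Ω → ℝ are independent random variables with E[N] = 0, E[N²] ≤ σ² for a given σ > 0, E[|N|^p] ≤ C_p·σ^p for given p ≥ 2 and C_p ≥ 1, for every u ∈ ℝ^d, E[⟨X,u⟩⁴] ≤ C·(E[⟨X,u⟩²])² for a given C ≥ 1, and for every unit vector u ∈ ℝ^d, 1/C₃ ≤ E[⟨X,u⟩²] ≤ 1 for a given C₃ ≥ 1 (all stated moments finite). Let w, w* ∈ ℝ^d, let n ≥ 1 be an integer, α ∈ (0,1), and let κ > 0 satisfy κ ≥ max{ 8·√(C·E[⟨X, w−w*⟩²]), 2·(8·C_p·C)^{1/p}·σ, 2·(8·C_p·√(nα)/log(2/α))^{1/(p−1)}·σ }. Then ‖ E[ κ·((⟨X, w−w*⟩ − N)/max(|⟨X, w−w*⟩ − N|, κ))·X ] ‖ ≥ (11/(16·C₃))·‖w − w*‖ − log(2/α)·σ/(8·√(nα)). -/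
/-!
Write `v = w - w*`, `u = v / ‖v‖`, `g = ⟪X, u⟫` and `ψ = huberClip κ`. The norm of the expected
clipped gradient is at least its component `E[ψ(‖v‖ g - N) g]` along `u`. Without clipping this
would be `‖v‖ E[g²]`, because `N` is centred and independent of `X`. The clipping error obeys
`|t - ψ t| = (|t| - κ)₊ ≤ (‖v‖|g| - κ/2)₊ + (|N| - κ/2)₊`. The first part is at most
`4 ‖v‖³ |g|³ / κ²`, which hypercontractivity and the first lower bound on `κ` turn into
`‖v‖ E[g²] / 16`. The second part is independent of `g`, and `E(|N| - κ/2)₊ ≤ E|N|^p (2/κ)^(p-1)`,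
which the third lower bound on `κ` turns into `log(2/α) σ / (8 √(nα))`. Finally `E[g²] ≥ 1/C₃`.
-/

open MeasureTheory ProbabilityTheory
open scoped RealInnerProductSpace

/-- Clamping `t` to `[-κ, κ]`: the derivative of the Huber loss with threshold `κ`. -/
noncomputable def huberClip (κ t : ℝ) : ℝ := κ * (t / max |t| κ)

lemma continuous_huberClip {κ : ℝ} (hκ : 0 < κ) : Continuous (huberClip κ) :=
  continuous_const.mul <| continuous_id.div (continuous_abs.max continuous_const)
    fun _ => (hκ.trans_le (le_max_right _ _)).ne'

lemma abs_huberClip_le {κ : ℝ} (hκ : 0 < κ) (t : ℝ) : |huberClip κ t| ≤ κ := by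
  have hm : 0 < max |t| κ := hκ.trans_le (le_max_right _ _)
  rw [huberClip, abs_mul, abs_of_pos hκ, abs_div, abs_of_pos hm]
  exact mul_le_of_le_one_right hκ.le ((div_le_one hm).2 (le_max_left _ _))

lemma abs_sub_huberClip {κ : ℝ} (hκ : 0 < κ) (t : ℝ) :
    |t - huberClip κ t| = max (|t| - κ) 0 := by
  rcases le_or_gt |t| κ with h | h
  · rw [huberClip, max_eq_right h, max_eq_right (by linarith), mul_div_cancel₀ _ hκ.ne',
      sub_self, abs_zero]
  · have ht : |t| ≠ 0 := (hκ.trans h).ne'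
    have he : t - huberClip κ t = t * ((|t| - κ) / |t|) := by
      rw [huberClip, max_eq_left h.le]; field_simp
    rw [he, abs_mul, abs_div, abs_abs, abs_of_pos (sub_pos.2 h), max_eq_left (by linarith),
      mul_div_cancel₀ _ ht]

lemma max_abs_sub_sub_le (a b κ : ℝ) :
    max (|a - b| - κ) 0 ≤ max (|a| - κ / 2) 0 + max (|b| - κ / 2) 0 :=
  max_le (by linarith [abs_sub a b, le_max_left (|a| - κ / 2) 0, le_max_left (|b| - κ / 2) 0])
    (by positivity)

lemma max_sub_half_le_cube {κ a : ℝ} (hκ : 0 < κ) (ha : 0 ≤ a) :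
    max (a - κ / 2) 0 ≤ 4 * a ^ 3 / κ ^ 2 := by
  refine max_le ?_ (by positivity)
  rw [le_div_iff₀ (by positivity)]
  nlinarith [mul_nonneg (sq_nonneg (2 * a - κ)) (by positivity : 0 ≤ a + κ / 2),
    mul_nonneg (mul_nonneg ha ha) hκ.le]

lemma max_abs_sub_half_le_rpow {κ p : ℝ} (hκ : 0 < κ) (hp : 1 ≤ p) (b : ℝ) :
    max (|b| - κ / 2) 0 ≤ |b| ^ p * (2 / κ) ^ (p - 1) := by
  refine max_le ?_ (by positivity)
  rcases le_or_gt |b| (κ / 2) with h | h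
  · linarith [show 0 ≤ |b| ^ p * (2 / κ) ^ (p - 1) by positivity]
  have hb : 0 < |b| := lt_trans (by positivity) h
  have hone : 1 ≤ (|b| * (2 / κ)) ^ (p - 1) :=
    Real.one_le_rpow (by rw [mul_div_assoc', le_div_iff₀ hκ]; linarith) (by linarith)
  calc |b| - κ / 2 ≤ |b| * (|b| * (2 / κ)) ^ (p - 1) := by nlinarith
    _ = |b| ^ p * (2 / κ) ^ (p - 1) := by
      rw [Real.mul_rpow hb.le (by positivity), Real.rpow_sub_one hb.ne']
      field_simp

lemma rpow_mul_two_div_rpow_le {κ σ p K : ℝ} (hσ : 0 < σ) (hp : 1 < p) (hK : 0 < K)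
    (h : 2 * K ^ (1 / (p - 1)) * σ ≤ κ) :
    σ ^ p * (2 / κ) ^ (p - 1) ≤ σ / K := by
  have hq : p - 1 ≠ 0 := (sub_pos.2 hp).ne'
  have hKq : 0 < K ^ (p - 1)⁻¹ := Real.rpow_pos_of_pos hK _
  rw [one_div] at h
  have hκ : 0 < κ := by linarith [mul_pos (mul_pos two_pos hKq) hσ]
  have hratio : 2 * σ / κ ≤ (K ^ (p - 1)⁻¹)⁻¹ := by
    rw [div_le_iff₀ hκ, ← div_eq_inv_mul, le_div_iff₀ hKq]; linarith
  calc σ ^ p * (2 / κ) ^ (p - 1) = σ * (2 * σ / κ) ^ (p - 1) := by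
        rw [mul_comm 2 σ, mul_div_assoc, Real.mul_rpow hσ.le (by positivity),
          Real.rpow_sub_one hσ.ne']
        field_simp
    _ ≤ σ * ((K ^ (p - 1)⁻¹)⁻¹) ^ (p - 1) := by gcongr
    _ = σ / K := by
      rw [Real.inv_rpow hKq.le, Real.rpow_inv_rpow hK.le hq, div_eq_mul_inv]

lemma abs_sub_huberClip_mul_le {κ r : ℝ} (hκ : 0 < κ) (hr : 0 ≤ r) (x n : ℝ) :
    |(r * x - n - huberClip κ (r * x - n)) * x| ≤
      4 * r ^ 3 / κ ^ 2 * x ^ 4 + max (|n| - κ / 2) 0 * |x| := by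
  have hsignal := max_sub_half_le_cube hκ (abs_nonneg (r * x))
  rw [abs_mul, abs_of_nonneg hr] at hsignal
  rw [abs_mul, abs_sub_huberClip hκ, ← Even.pow_abs (by norm_num) x]
  calc max (|r * x - n| - κ) 0 * |x|
      ≤ (max (|r * x| - κ / 2) 0 + max (|n| - κ / 2) 0) * |x| := by
        gcongr; exact max_abs_sub_sub_le _ _ _
    _ ≤ (4 * (r * |x|) ^ 3 / κ ^ 2 + max (|n| - κ / 2) 0) * |x| := by
        rw [abs_mul, abs_of_nonneg hr]; gcongr
    _ = 4 * r ^ 3 / κ ^ 2 * |x| ^ 4 + max (|n| - κ / 2) 0 * |x| := by ring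

section Moments

variable {Ω : Type*} [MeasurableSpace Ω] {μ : Measure Ω}

lemma integral_abs_le_one_add_integral_sq_div_two [IsProbabilityMeasure μ] {g : Ω → ℝ}
    (hg : MemLp g 2 μ) : ∫ ω, |g ω| ∂μ ≤ (1 + ∫ ω, g ω ^ 2 ∂μ) / 2 := by
  have hg2 := hg.integrable_sq
  calc ∫ ω, |g ω| ∂μ ≤ ∫ ω, (1 + g ω ^ 2) / 2 ∂μ :=
        integral_mono (hg.integrable one_le_two).abs
          (((integrable_const 1).add hg2).div_const 2)
          fun ω => by nlinarith [sq_nonneg (|g ω| - 1), sq_abs (g ω)]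
    _ = (1 + ∫ ω, g ω ^ 2 ∂μ) / 2 := by
        rw [integral_div, integral_add (integrable_const 1) hg2, integral_const, probReal_univ,
          one_smul]

lemma integrable_max_abs_sub_half {N : Ω → ℝ} {κ p : ℝ} (hN : AEStronglyMeasurable N μ)
    (hNp : Integrable (fun ω => |N ω| ^ p) μ) (hκ : 0 < κ) (hp : 1 ≤ p) :
    Integrable (fun ω => max (|N ω| - κ / 2) 0) μ := by
  refine (hNp.mul_const ((2 / κ) ^ (p - 1))).mono'
    ((continuous_abs.sub continuous_const).max continuous_const |>.comp_aestronglyMeasurable hN)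
    (.of_forall fun ω => ?_)
  rw [Real.norm_eq_abs, abs_of_nonneg (le_max_right _ _)]
  exact max_abs_sub_half_le_rpow hκ hp (N ω)

lemma integral_max_abs_sub_half_le {N : Ω → ℝ} {κ p : ℝ} (hN : AEStronglyMeasurable N μ)
    (hNp : Integrable (fun ω => |N ω| ^ p) μ) (hκ : 0 < κ) (hp : 1 ≤ p) :
    ∫ ω, max (|N ω| - κ / 2) 0 ∂μ ≤ (∫ ω, |N ω| ^ p ∂μ) * (2 / κ) ^ (p - 1) := by
  rw [← integral_mul_const]
  exact integral_mono (integrable_max_abs_sub_half hN hNp hκ hp) (hNp.mul_const _)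
    fun ω => max_abs_sub_half_le_rpow hκ hp (N ω)

lemma integral_max_abs_sub_half_le_of_moment {N : Ω → ℝ} {κ p σ Cp K : ℝ}
    (hN : AEStronglyMeasurable N μ) (hNp : Integrable (fun ω => |N ω| ^ p) μ) (hp : 1 < p)
    (hσ : 0 < σ) (hCp : 0 ≤ Cp) (hK : 0 < K) (hmoment : ∫ ω, |N ω| ^ p ∂μ ≤ Cp * σ ^ p)
    (hκ : 2 * K ^ (1 / (p - 1)) * σ ≤ κ) :
    ∫ ω, max (|N ω| - κ / 2) 0 ∂μ ≤ Cp * (σ / K) := by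
  have hκ0 : 0 < κ := lt_of_lt_of_le (by positivity) hκ
  calc ∫ ω, max (|N ω| - κ / 2) 0 ∂μ ≤ (∫ ω, |N ω| ^ p ∂μ) * (2 / κ) ^ (p - 1) :=
        integral_max_abs_sub_half_le hN hNp hκ0 hp.le
    _ ≤ Cp * σ ^ p * (2 / κ) ^ (p - 1) := by gcongr
    _ ≤ Cp * (σ / K) := by
        rw [mul_assoc]; gcongr; exact rpow_mul_two_div_rpow_le hσ hp hK hκ

lemma integral_huberClip_mul_ge [IsFiniteMeasure μ] {g N : Ω → ℝ} {κ r : ℝ}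
    (hκ : 0 < κ) (hr : 0 ≤ r) (hg : MemLp g 4 μ) (hN : Integrable N μ)
    (hNmean : ∫ ω, N ω ∂μ = 0) (hind : IndepFun N g μ)
    (htail : Integrable (fun ω => max (|N ω| - κ / 2) 0) μ) :
    r * ∫ ω, g ω ^ 2 ∂μ - (4 * r ^ 3 / κ ^ 2 * ∫ ω, g ω ^ 4 ∂μ +
        (∫ ω, max (|N ω| - κ / 2) 0 ∂μ) * ∫ ω, |g ω| ∂μ) ≤
      ∫ ω, huberClip κ (r * g ω - N ω) * g ω ∂μ := by
  have hg1 : Integrable g μ := hg.integrable (by norm_num)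
  have hg2 : Integrable (fun ω => g ω ^ 2) μ := (hg.mono_exponent (by norm_num)).integrable_sq
  have hg4 : Integrable (fun ω => g ω ^ 4) μ := by
    simpa [Real.norm_eq_abs, Even.pow_abs (by norm_num : Even 4)] using
      (hg : MemLp g ((4 : ℕ) : ENNReal) μ).integrable_norm_pow' (p := 4)
  have hNg : Integrable (fun ω => N ω * g ω) μ := hind.integrable_mul hN hg1
  have hNg_zero : ∫ ω, N ω * g ω ∂μ = 0 := by
    rw [hind.integral_fun_mul_eq_mul_integral hN.1 hg1.1, hNmean, zero_mul]
  have htail_ind : IndepFun (fun ω => max (|N ω| - κ / 2) 0) (fun ω => |g ω|) μ :=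
    hind.comp ((measurable_id.abs.sub measurable_const).max measurable_const) measurable_abs
  have hψg : Integrable (fun ω => huberClip κ (r * g ω - N ω) * g ω) μ :=
    hg1.bdd_mul ((continuous_huberClip hκ).comp_aestronglyMeasurable
      ((hg1.1.const_mul r).sub hN.1)) (.of_forall fun ω => abs_huberClip_le hκ _)
  have htail_g : Integrable (fun ω => max (|N ω| - κ / 2) 0 * |g ω|) μ :=
    htail_ind.integrable_mul htail hg1.abs
  have hlinear_int : Integrable (fun ω => (r * g ω - N ω) * g ω) μ :=
    ((hg2.const_mul r).sub hNg).congr (.of_forall fun ω => by simp only [Pi.sub_apply]; ring)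
  have hlinear : ∫ ω, (r * g ω - N ω) * g ω ∂μ = r * ∫ ω, g ω ^ 2 ∂μ := by
    simp_rw [sub_mul, mul_assoc, ← sq]
    rw [integral_sub (hg2.const_mul r) hNg, integral_const_mul, hNg_zero, sub_zero]
  have hresid_int : Integrable
      (fun ω => (r * g ω - N ω - huberClip κ (r * g ω - N ω)) * g ω) μ :=
    (hlinear_int.sub hψg).congr (.of_forall fun ω => by simp only [Pi.sub_apply]; ring)
  have hresid : ∫ ω, (r * g ω - N ω - huberClip κ (r * g ω - N ω)) * g ω ∂μ ≤
      4 * r ^ 3 / κ ^ 2 * ∫ ω, g ω ^ 4 ∂μ +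
        (∫ ω, max (|N ω| - κ / 2) 0 ∂μ) * ∫ ω, |g ω| ∂μ := by
    rw [← integral_const_mul, ← htail_ind.integral_fun_mul_eq_mul_integral htail.1 hg1.abs.1,
      ← integral_add (hg4.const_mul _) htail_g]
    exact integral_mono hresid_int ((hg4.const_mul _).add htail_g)
      fun ω => (le_abs_self _).trans (abs_sub_huberClip_mul_le hκ hr _ _)
  have hsplit : ∫ ω, huberClip κ (r * g ω - N ω) * g ω ∂μ =
      ∫ ω, (r * g ω - N ω) * g ω ∂μ -
        ∫ ω, (r * g ω - N ω - huberClip κ (r * g ω - N ω)) * g ω ∂μ := by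
    rw [← integral_sub hlinear_int hresid_int]
    congr 1 with ω
    ring
  linarith

lemma integral_huberClip_mul_inner_le_norm {E : Type*} [NormedAddCommGroup E]
    [InnerProductSpace ℝ E] [CompleteSpace E]
    {X : Ω → E} {N : Ω → ℝ} {κ : ℝ} (hκ : 0 < κ) (hX : Integrable X μ)
    (hN : AEStronglyMeasurable N μ) (v : E) {u : E} (hu : ‖u‖ ≤ 1) :
    ∫ ω, huberClip κ (⟪X ω, v⟫ - N ω) * ⟪X ω, u⟫ ∂μ ≤
      ‖∫ ω, huberClip κ (⟪X ω, v⟫ - N ω) • X ω ∂μ‖ := by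
  have hψ : AEStronglyMeasurable (fun ω => huberClip κ (⟪X ω, v⟫ - N ω)) μ :=
    (continuous_huberClip hκ).comp_aestronglyMeasurable
      ((hX.1.inner aestronglyMeasurable_const).sub hN)
  have hF : Integrable (fun ω => huberClip κ (⟪X ω, v⟫ - N ω) • X ω) μ :=
    hX.bdd_smul κ hψ (.of_forall fun ω => abs_huberClip_le hκ _)
  calc ∫ ω, huberClip κ (⟪X ω, v⟫ - N ω) * ⟪X ω, u⟫ ∂μ
      = ⟪u, ∫ ω, huberClip κ (⟪X ω, v⟫ - N ω) • X ω ∂μ⟫ := by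
        rw [← integral_inner hF]
        congr 1 with ω
        rw [real_inner_smul_right, real_inner_comm u]
    _ ≤ ‖u‖ * ‖∫ ω, huberClip κ (⟪X ω, v⟫ - N ω) • X ω ∂μ‖ := real_inner_le_norm _ _
    _ ≤ ‖∫ ω, huberClip κ (⟪X ω, v⟫ - N ω) • X ω ∂μ‖ := mul_le_of_le_one_left (norm_nonneg _) hu

lemma integral_huberClip_mul_ge_of_hypercontractive [IsProbabilityMeasure μ] {g N : Ω → ℝ}
    {κ r C : ℝ} (hκ : 0 < κ) (hr : 0 ≤ r) (hg : MemLp g 4 μ) (hN : Integrable N μ)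
    (hNmean : ∫ ω, N ω ∂μ = 0) (hind : IndepFun N g μ)
    (htail : Integrable (fun ω => max (|N ω| - κ / 2) 0) μ)
    (hhc : ∫ ω, g ω ^ 4 ∂μ ≤ C * (∫ ω, g ω ^ 2 ∂μ) ^ 2) (hg2 : ∫ ω, g ω ^ 2 ∂μ ≤ 1)
    (hκC : C * (r ^ 2 * ∫ ω, g ω ^ 2 ∂μ) ≤ (κ / 8) ^ 2) :
    15 / 16 * (r * ∫ ω, g ω ^ 2 ∂μ) - ∫ ω, max (|N ω| - κ / 2) 0 ∂μ ≤
      ∫ ω, huberClip κ (r * g ω - N ω) * g ω ∂μ := by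
  set s := ∫ ω, g ω ^ 2 ∂μ
  have hmain := integral_huberClip_mul_ge hκ hr hg hN hNmean hind htail
  have hcubic : 4 * r ^ 3 / κ ^ 2 * ∫ ω, g ω ^ 4 ∂μ ≤ r * s / 16 :=
    calc 4 * r ^ 3 / κ ^ 2 * ∫ ω, g ω ^ 4 ∂μ
        ≤ 4 * r ^ 3 / κ ^ 2 * (C * s ^ 2) := by gcongr
      _ = 4 * r * s / κ ^ 2 * (C * (r ^ 2 * s)) := by ring
      _ ≤ 4 * r * s / κ ^ 2 * (κ / 8) ^ 2 := by gcongr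
      _ = r * s / 16 := by field_simp; ring
  have hg_abs : ∫ ω, |g ω| ∂μ ≤ 1 :=
    (integral_abs_le_one_add_integral_sq_div_two (hg.mono_exponent (by norm_num))).trans
      (by linarith)
  have hnoise := mul_le_of_le_one_right
    (integral_nonneg (μ := μ) fun ω => le_max_right (|N ω| - κ / 2) 0) hg_abs
  linarith

lemma norm_integral_huberClip_smul_ge {E : Type*} [NormedAddCommGroup E] [InnerProductSpace ℝ E]
    [CompleteSpace E] [MeasurableSpace E] [OpensMeasurableSpace E] [IsProbabilityMeasure μ]
    {X : Ω → E} {N : Ω → ℝ} {κ r C : ℝ}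
    (hκ : 0 < κ) (hr : 0 ≤ r) (hX : MemLp X 4 μ) (hN : Integrable N μ)
    (hNmean : ∫ ω, N ω ∂μ = 0) (hind : IndepFun X N μ)
    (htail : Integrable (fun ω => max (|N ω| - κ / 2) 0) μ) {u v : E} (hu : ‖u‖ = 1)
    (hvu : v = r • u) (hhc : ∫ ω, ⟪X ω, u⟫ ^ 4 ∂μ ≤ C * (∫ ω, ⟪X ω, u⟫ ^ 2 ∂μ) ^ 2)
    (hX2 : ∫ ω, ⟪X ω, u⟫ ^ 2 ∂μ ≤ 1) (hκC : C * ∫ ω, ⟪X ω, v⟫ ^ 2 ∂μ ≤ (κ / 8) ^ 2) :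
    15 / 16 * (r * ∫ ω, ⟪X ω, u⟫ ^ 2 ∂μ) - ∫ ω, max (|N ω| - κ / 2) 0 ∂μ ≤
      ‖∫ ω, huberClip κ (⟪X ω, v⟫ - N ω) • X ω ∂μ‖ := by
  have hinner (x : E) : ⟪x, v⟫ = r * ⟪x, u⟫ := by rw [hvu, real_inner_smul_right]
  simp only [hinner, mul_pow, integral_const_mul] at hκC ⊢
  refine (integral_huberClip_mul_ge_of_hypercontractive hκ hr (hX.inner_const u) hN hNmean
    (hind.symm.comp measurable_id (continuous_id.inner continuous_const).measurable) htail hhc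
    hX2 hκC).trans ?_
  simp only [← hinner]
  exact integral_huberClip_mul_inner_le_norm hκ (hX.integrable (by norm_num)) hN.1 v hu.le

end Moments

theorem stmt6_general {Ω : Type*} [MeasureSpace Ω] [IsProbabilityMeasure (ℙ : Measure Ω)]
    {d : ℕ} (X : Ω → EuclideanSpace ℝ (Fin d)) (N : Ω → ℝ)
    (hNmeas : Measurable N)
    (hindep : IndepFun X N ℙ)
    (hNmean : (∫ ω, N ω) = 0)
    (σ : ℝ) (hσ : 0 < σ)
    (hN2 : MemLp N 2 ℙ)
    (p : ℝ) (hp : 2 ≤ p) (Cp : ℝ) (hCp : 1 ≤ Cp)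
    (hNpInt : Integrable (fun ω => |N ω| ^ p) ℙ)
    (hNp : (∫ ω, |N ω| ^ p) ≤ Cp * σ ^ p)
    (C : ℝ)
    (hX4 : MemLp X 4 ℙ)
    (hhc : ∀ u : EuclideanSpace ℝ (Fin d),
      (∫ ω, ⟪X ω, u⟫ ^ 4) ≤ C * (∫ ω, ⟪X ω, u⟫ ^ 2) ^ 2)
    (C₃ : ℝ) (hC₃ : 1 ≤ C₃)
    (hcond : ∀ u : EuclideanSpace ℝ (Fin d), ‖u‖ = 1 →
      1 / C₃ ≤ (∫ ω, ⟪X ω, u⟫ ^ 2) ∧ (∫ ω, ⟪X ω, u⟫ ^ 2) ≤ 1)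
    (w wstar : EuclideanSpace ℝ (Fin d)) (n : ℕ) (hn : 1 ≤ n)
    (α : ℝ) (hα : α ∈ Set.Ioo (0 : ℝ) 1)
    (κ : ℝ) (hκpos : 0 < κ)
    (hκ : max (max (8 * Real.sqrt (C * ∫ ω, ⟪X ω, w - wstar⟫ ^ 2))
          (2 * (8 * Cp * C) ^ (1 / p) * σ))
        (2 * (8 * Cp * Real.sqrt (n * α) / Real.log (2 / α)) ^ (1 / (p - 1)) * σ) ≤ κ) :
    (11 / (16 * C₃)) * ‖w - wstar‖ - Real.log (2 / α) * σ / (8 * Real.sqrt (n * α)) ≤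
      ‖∫ ω, (κ * ((⟪X ω, w - wstar⟫ - N ω) /
          max (|⟪X ω, w - wstar⟫ - N ω|) κ)) • X ω‖ := by
  obtain ⟨hα0, hα1⟩ := hα
  have hlog : 0 < Real.log (2 / α) := Real.log_pos (by rw [lt_div_iff₀ hα0]; linarith)
  have hnα : 0 < Real.sqrt (n * α) := Real.sqrt_pos.2 (mul_pos (by exact_mod_cast hn) hα0)
  set v := w - wstar
  rcases eq_or_ne v 0 with hv | hv
  · rw [hv, norm_zero, mul_zero, zero_sub]
    exact (neg_nonpos.2 (by positivity)).trans (norm_nonneg _)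
  set u := ‖v‖⁻¹ • v
  have hu : ‖u‖ = 1 := norm_smul_inv_norm hv
  have hvu : v = ‖v‖ • u := by rw [smul_inv_smul₀ (norm_ne_zero_iff.2 hv)]
  obtain ⟨hs_lb, hs_ub⟩ := hcond u hu
  have h8 : 8 * Real.sqrt (C * ∫ ω, ⟪X ω, v⟫ ^ 2) ≤ κ :=
    (le_max_left _ _).trans ((le_max_left _ _).trans hκ)
  have hκC := (Real.sqrt_le_iff.1 (by linarith : Real.sqrt (C * ∫ ω, ⟪X ω, v⟫ ^ 2) ≤ κ / 8)).2
  have hgrad := norm_integral_huberClip_smul_ge hκpos (norm_nonneg v) hX4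
    (hN2.integrable one_le_two) hNmean hindep
    (integrable_max_abs_sub_half hNmeas.aestronglyMeasurable hNpInt hκpos (by linarith))
    hu hvu (hhc u) hs_ub hκC
  have hnoise := integral_max_abs_sub_half_le_of_moment hNmeas.aestronglyMeasurable hNpInt
    (by linarith) hσ (by linarith) (by positivity) hNp ((le_max_right _ _).trans hκ)
  have hL : Cp * (σ / (8 * Cp * Real.sqrt (n * α) / Real.log (2 / α))) =
      Real.log (2 / α) * σ / (8 * Real.sqrt (n * α)) := by
    field_simp
  have hC₃_le : 11 / (16 * C₃) * ‖v‖ ≤ 15 / 16 * (‖v‖ * ∫ ω, ⟪X ω, u⟫ ^ 2) := by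
    rw [div_le_iff₀ (by linarith)] at hs_lb
    rw [div_mul_eq_mul_div, div_le_iff₀ (by linarith)]
    nlinarith [norm_nonneg v]
  refine le_trans ?_ hgrad
  linarith

/-- Under the regression model (independent covariate `X` and noise `N`,
`E[N]=0`, `E[N²] ≤ σ²`, `E[|N|^p] ≤ C_p σ^p`, L4–L2 hypercontractive covariates with
constant `C`, and `1/C₃ ≤ E[⟨X,u⟩²] ≤ 1` for unit `u`), if the clipping parameter `κ` is
at least `max{8√(C·E[⟨X,w−w*⟩²]), 2(8C_p C)^{1/p}σ, 2(8C_p√(nα)/log(2/α))^{1/(p−1)}σ}`,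
then the norm of the expected clipped gradient at `w` is at least
`(11/(16C₃))·‖w−w*‖ − log(2/α)·σ/(8√(nα))`. -/
theorem stmt6 {Ω : Type*} [MeasureSpace Ω] [IsProbabilityMeasure (ℙ : Measure Ω)]
    {d : ℕ} (X : Ω → EuclideanSpace ℝ (Fin d)) (N : Ω → ℝ)
    (hXmeas : Measurable X) (hNmeas : Measurable N)
    (hindep : IndepFun X N ℙ)
    (hNmean : (∫ ω, N ω) = 0)
    (σ : ℝ) (hσ : 0 < σ)
    (hN2 : MemLp N 2 ℙ) (hNvar : (∫ ω, (N ω) ^ 2) ≤ σ ^ 2)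
    (p : ℝ) (hp : 2 ≤ p) (Cp : ℝ) (hCp : 1 ≤ Cp)
    (hNpInt : Integrable (fun ω => |N ω| ^ p) ℙ)
    (hNp : (∫ ω, |N ω| ^ p) ≤ Cp * σ ^ p)
    (C : ℝ) (hC : 1 ≤ C)
    (hX4 : MemLp X 4 ℙ)
    (hhc : ∀ u : EuclideanSpace ℝ (Fin d),
      (∫ ω, ⟪X ω, u⟫ ^ 4) ≤ C * (∫ ω, ⟪X ω, u⟫ ^ 2) ^ 2)
    (C₃ : ℝ) (hC₃ : 1 ≤ C₃)
    (hcond : ∀ u : EuclideanSpace ℝ (Fin d), ‖u‖ = 1 →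
      1 / C₃ ≤ (∫ ω, ⟪X ω, u⟫ ^ 2) ∧ (∫ ω, ⟪X ω, u⟫ ^ 2) ≤ 1)
    (w wstar : EuclideanSpace ℝ (Fin d)) (n : ℕ) (hn : 1 ≤ n)
    (α : ℝ) (hα : α ∈ Set.Ioo (0 : ℝ) 1)
    (κ : ℝ) (hκpos : 0 < κ)
    (hκ : max (max (8 * Real.sqrt (C * ∫ ω, ⟪X ω, w - wstar⟫ ^ 2))
          (2 * (8 * Cp * C) ^ (1 / p) * σ))
        (2 * (8 * Cp * Real.sqrt (n * α) / Real.log (2 / α)) ^ (1 / (p - 1)) * σ) ≤ κ) :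
    (11 / (16 * C₃)) * ‖w - wstar‖ - Real.log (2 / α) * σ / (8 * Real.sqrt (n * α)) ≤
      ‖∫ ω, (κ * ((⟪X ω, w - wstar⟫ - N ω) /
          max (|⟪X ω, w - wstar⟫ - N ω|) κ)) • X ω‖ :=
  stmt6_general X N hNmeas hindep hNmean σ hσ hN2 p hp Cp hCp hNpInt hNp C hX4 hhc C₃ hC₃ hcond w
    wstar n hn α hα κ hκpos hκ
end

section
/- Let B be a finite set, G ⊆ B nonempty, α ∈ (0,1] with α·|B| ≤ |G|, and let β : B → [0,1] satisfy Σ_{b∈G} β_b ≥ (3/4)·|G|. Let v : B → ℝ with v_b ≥ 0 for all b, let m ≥ 0, σ > 0, C ≥ 1, c₂ > 0, and let n be a real number with n ≥ 256·c₂·C. Assume the mean-squared-deviation bound (1/|G|)·Σ_{b∈G} (v_b − m)² ≤ c₂·(σ² + C·m²)/n. Define θ₀ := inf{ t ∈ ℝ : Σ_{b∈B : v_b ≥ t} β_b ≤ α·|B|/4 } and θ₁ := (c₂/n)·( σ² + ( (8·√C/7)·θ₀ + σ/7 )² ). Then θ₁ ≥ c₂·(σ² + C·m²)/n. -/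
set_option maxHeartbeats 1600000 in
/-- With a nice weight vector `β` (total weight on the good batches `G` at
least `(3/4)|G|`), nonnegative scores `v`, a mean-squared-deviation bound
`(1/|G|)·Σ_{b∈G}(v_b − m)² ≤ c₂(σ² + C m²)/n`, and `n ≥ 256 c₂ C`, the threshold
`θ₁ := (c₂/n)(σ² + ((8√C/7)θ₀ + σ/7)²)` with
`θ₀ := inf{t : Σ_{b: v_b ≥ t} β_b ≤ α|B|/4}` satisfies `θ₁ ≥ c₂(σ² + C m²)/n`. -/
theorem stmt7 {ι : Type*} (B G : Finset ι) (hGB : G ⊆ B) (hGne : G.Nonempty)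
    (α : ℝ) (hα0 : 0 < α) (hα1 : α ≤ 1) (hαB : α * B.card ≤ G.card)
    (β : ι → ℝ) (hβ : ∀ b ∈ B, 0 ≤ β b ∧ β b ≤ 1)
    (hβG : (3 / 4 : ℝ) * G.card ≤ ∑ b ∈ G, β b)
    (v : ι → ℝ) (hv : ∀ b ∈ B, 0 ≤ v b)
    (m : ℝ) (hm : 0 ≤ m) (σ : ℝ) (hσ : 0 < σ)
    (C : ℝ) (hC : 1 ≤ C) (c₂ : ℝ) (hc₂ : 0 < c₂)
    (n : ℝ) (hn : 256 * c₂ * C ≤ n)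
    (hmsd : (G.card : ℝ)⁻¹ * ∑ b ∈ G, (v b - m) ^ 2 ≤ c₂ * (σ ^ 2 + C * m ^ 2) / n) :
    c₂ * (σ ^ 2 + C * m ^ 2) / n ≤
      (c₂ / n) * (σ ^ 2 +
        ((8 * Real.sqrt C / 7) *
            sInf {t : ℝ | ∑ b ∈ B.filter (fun b => t ≤ v b), β b ≤ α * B.card / 4} +
          σ / 7) ^ 2) := by
  have hBne : B.Nonempty := hGne.mono hGB
  have hn0 : 0 < n := lt_of_lt_of_le (by positivity) hn
  have hBcard : (0:ℝ) < B.card := by exact_mod_cast Finset.card_pos.mpr hBne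
  have hGcard : (0:ℝ) < G.card := by exact_mod_cast Finset.card_pos.mpr hGne
  set S := {t : ℝ | ∑ b ∈ B.filter (fun b => t ≤ v b), β b ≤ α * B.card / 4} with hSdef
  set Δ := Real.sqrt (c₂ * (σ ^ 2 + C * m ^ 2) / n) with hΔdef
  have hpos : 0 < c₂ * (σ ^ 2 + C * m ^ 2) / n := by positivity
  have hΔ0 : 0 < Δ := Real.sqrt_pos.mpr hpos
  have hΔsq : Δ ^ 2 = c₂ * (σ ^ 2 + C * m ^ 2) / n := Real.sq_sqrt hpos.le
  have hsC : 0 < Real.sqrt C := Real.sqrt_pos.mpr (by linarith)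
  have hsCsq : Real.sqrt C ^ 2 = C := Real.sq_sqrt (by linarith)
  -- S is nonempty
  have hSne : S.Nonempty := by
    refine ⟨B.sup' hBne v + 1, ?_⟩
    have hempty : B.filter (fun b => B.sup' hBne v + 1 ≤ v b) = ∅ := by
      apply Finset.filter_false_of_mem
      intro b hb
      have := Finset.le_sup' v hb
      push_neg
      linarith
    simp only [hSdef, Set.mem_setOf_eq, hempty, Finset.sum_empty]
    positivity
  -- key: m - 2Δ is a lower bound for S
  have hkey : α * B.card / 4 < ∑ b ∈ B.filter (fun b => m - 2*Δ ≤ v b), β b := by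
    set t := m - 2*Δ with ht
    set K := G.filter (fun b => ¬ t ≤ v b) with hK
    -- count bound via Chebyshev
    have hsum : ∑ b ∈ G, (v b - m) ^ 2 ≤ (G.card : ℝ) * Δ ^ 2 := by
      rw [hΔsq]
      rw [inv_mul_le_iff₀ hGcard] at hmsd
      linarith [hmsd]
    have hKsum : (K.card : ℝ) * (4 * Δ ^ 2) ≤ ∑ b ∈ K, (v b - m) ^ 2 := by
      have h := Finset.sum_le_sum (f := fun _ => 4 * Δ ^ 2) (g := fun b => (v b - m) ^ 2)
        (s := K) ?_
      · simpa [Finset.sum_const, nsmul_eq_mul] using h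
      · intro b hb
        have hb' : ¬ t ≤ v b := (Finset.mem_filter.mp hb).2
        push_neg at hb'
        rw [ht] at hb'
        show 4 * Δ ^ 2 ≤ (v b - m) ^ 2
        nlinarith [hΔ0, hb']
    have hKsum' : ∑ b ∈ K, (v b - m) ^ 2 ≤ ∑ b ∈ G, (v b - m) ^ 2 :=
      Finset.sum_le_sum_of_subset_of_nonneg (Finset.filter_subset _ _)
        (fun b _ _ => by positivity)
    have hKcard : (K.card : ℝ) ≤ (G.card : ℝ) / 4 := by
      have h4 : (0:ℝ) < 4 * Δ ^ 2 := by positivity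
      nlinarith
    -- weight on good batches above threshold
    have hsplit : ∑ b ∈ G.filter (fun b => t ≤ v b), β b + ∑ b ∈ K, β b = ∑ b ∈ G, β b :=
      Finset.sum_filter_add_sum_filter_not G _ β
    have hKβ : ∑ b ∈ K, β b ≤ (K.card : ℝ) := by
      calc ∑ b ∈ K, β b ≤ ∑ b ∈ K, (1:ℝ) := by
            apply Finset.sum_le_sum
            intro b hb
            exact (hβ b (hGB (Finset.mem_filter.mp hb).1)).2
        _ = (K.card : ℝ) := by simp
    have hG2 : (G.card : ℝ) / 2 ≤ ∑ b ∈ G.filter (fun b => t ≤ v b), β b := by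
      linarith
    have hsub : ∑ b ∈ G.filter (fun b => t ≤ v b), β b
        ≤ ∑ b ∈ B.filter (fun b => t ≤ v b), β b := by
      apply Finset.sum_le_sum_of_subset_of_nonneg
      · exact Finset.filter_subset_filter _ hGB
      · intro b hb _
        exact (hβ b (Finset.mem_filter.mp hb).1).1
    have hαB4 : α * B.card / 4 < (G.card : ℝ) / 2 := by nlinarith
    linarith
  have hlb : m - 2*Δ ≤ sInf S := by
    apply le_csInf hSne
    intro t' ht'
    by_contra hcon
    push_neg at hcon
    have hsubset : B.filter (fun b => m - 2*Δ ≤ v b) ⊆ B.filter (fun b => t' ≤ v b) := by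
      intro b hb
      simp only [Finset.mem_filter] at hb ⊢
      exact ⟨hb.1, le_trans hcon.le hb.2⟩
    have : ∑ b ∈ B.filter (fun b => m - 2*Δ ≤ v b), β b
        ≤ ∑ b ∈ B.filter (fun b => t' ≤ v b), β b := by
      apply Finset.sum_le_sum_of_subset_of_nonneg hsubset
      intro b hb _
      exact (hβ b (Finset.mem_filter.mp hb).1).1
    have ht'' : ∑ b ∈ B.filter (fun b => t' ≤ v b), β b ≤ α * B.card / 4 := ht'
    linarith
  -- Δ is small: Δ ≤ m/16 + σ/(16 √C)
  have hΔsmall : Δ ≤ m / 16 + σ / (16 * Real.sqrt C) := by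
    have hx : 0 ≤ m / 16 + σ / (16 * Real.sqrt C) := by positivity
    have hΔle : Δ ^ 2 ≤ (m / 16 + σ / (16 * Real.sqrt C)) ^ 2 := by
      rw [hΔsq]
      have h1 : c₂ * (σ ^ 2 + C * m ^ 2) / n ≤ (σ ^ 2 + C * m ^ 2) / (256 * C) := by
        rw [div_le_div_iff₀ hn0 (by positivity)]
        nlinarith [mul_le_mul_of_nonneg_left hn (show (0:ℝ) ≤ σ ^ 2 + C * m ^ 2 by positivity)]
      have h2 : (σ ^ 2 + C * m ^ 2) / (256 * C) ≤ (m / 16 + σ / (16 * Real.sqrt C)) ^ 2 := by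
        have hC0 : (0:ℝ) < C := by linarith
        have hcross : 0 ≤ 2 * (m/16) * (σ / (16 * Real.sqrt C)) := by positivity
        have hexp : (m / 16 + σ / (16 * Real.sqrt C)) ^ 2
            = (m/16)^2 + 2 * (m/16) * (σ / (16 * Real.sqrt C)) + (σ / (16 * Real.sqrt C))^2 := by
          ring
        have hlast : (σ / (16 * Real.sqrt C)) ^ 2 = σ ^ 2 / (256 * C) := by
          rw [div_pow, mul_pow, hsCsq]
          norm_num
        have hsplit2 : (σ ^ 2 + C * m ^ 2) / (256 * C) = σ ^ 2 / (256 * C) + (m/16)^2 := by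
          field_simp
          ring
        rw [hexp, hlast, hsplit2]
        linarith
      linarith
    nlinarith [hΔ0, hx]
  set θ := sInf S with hθ
  have hX : Real.sqrt C * m ≤ (8 * Real.sqrt C / 7) * θ + σ / 7 := by
    have h1 : (8 * Real.sqrt C / 7) * (m - 2*Δ) ≤ (8 * Real.sqrt C / 7) * θ := by
      apply mul_le_mul_of_nonneg_left hlb (by positivity)
    have h2 : Real.sqrt C * m ≤ (8 * Real.sqrt C / 7) * (m - 2*Δ) + σ / 7 := by
      have h3 : Real.sqrt C * (σ / (16 * Real.sqrt C)) = σ / 16 := by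
        field_simp
      have h4 : Real.sqrt C * Δ ≤ Real.sqrt C * m / 16 + σ / 16 := by
        calc Real.sqrt C * Δ ≤ Real.sqrt C * (m / 16 + σ / (16 * Real.sqrt C)) :=
              mul_le_mul_of_nonneg_left hΔsmall hsC.le
          _ = Real.sqrt C * m / 16 + Real.sqrt C * (σ / (16 * Real.sqrt C)) := by ring
          _ = Real.sqrt C * m / 16 + σ / 16 := by rw [h3]
      linarith
    linarith
  have hCm : C * m ^ 2 ≤ ((8 * Real.sqrt C / 7) * θ + σ / 7) ^ 2 := by
    have h0 : 0 ≤ Real.sqrt C * m := by positivity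
    have := pow_le_pow_left₀ h0 hX 2
    calc C * m ^ 2 = (Real.sqrt C * m) ^ 2 := by rw [mul_pow, hsCsq]
      _ ≤ _ := this
  calc c₂ * (σ ^ 2 + C * m ^ 2) / n = (c₂ / n) * (σ ^ 2 + C * m ^ 2) := by ring
    _ ≤ (c₂ / n) * (σ ^ 2 + ((8 * Real.sqrt C / 7) * θ + σ / 7) ^ 2) := by
        apply mul_le_mul_of_nonneg_left (by linarith) (by positivity)
end

section
/- Let B be a finite set, G ⊆ B nonempty, α ∈ (0,1] with α·|B| ≤ |G|, and let β : B → [0,1] satisfy Σ_{b∈G} β_b ≥ (3/4)·|G| and β^B := Σ_{b∈B} β_b > 0. Let v : B → ℝ with v_b ≥ 0 for all b, and let m, m′ ≥ 0 with |m − m′| ≤ σ for a given σ > 0. Let C ≥ 1, c₂ > 0, c₃ > 0, and let n be a real number with n ≥ max{ 1024·c₃·c₂·C·log²(2/α)/α, 256·c₂·C }. Assume (1/|G|)·Σ_{b∈G} (v_b − m)² ≤ c₂·(σ² + C·m²)/n. Define θ₀ := inf{ t ∈ ℝ : Σ_{b∈B : v_b ≥ t} β_b ≤ α·|B|/4 },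 θ₁ := (c₂/n)·( σ² + ( (8·√C/7)·θ₀ + σ/7 )² ), E_β[v] := Σ_{b∈B} (β_b/β^B)·v_b, and Var_β(v) := Σ_{b∈B} (β_b/β^B)·(v_b − E_β[v])². If Var_β(v) ≤ c₃·log²(2/α)·θ₁, then (3/4)·m′ − σ ≤ E_β[v] ≤ (4/3)·m′ + 2σ. -/
set_option maxHeartbeats 1000000 in
/-- Under the hypotheses of the threshold lemma, if additionally the
`β`-weighted variance of `v` is at most `c₃·log²(2/α)·θ₁`, then the `β`-weighted mean of
`v` satisfies `(3/4)m′ − σ ≤ E_β[v] ≤ (4/3)m′ + 2σ`, where `|m − m′| ≤ σ`. -/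
theorem stmt8 {ι : Type*} (B G : Finset ι) (hGB : G ⊆ B) (hGne : G.Nonempty)
    (α : ℝ) (hα0 : 0 < α) (hα1 : α ≤ 1) (hαB : α * B.card ≤ G.card)
    (β : ι → ℝ) (hβ : ∀ b ∈ B, 0 ≤ β b ∧ β b ≤ 1)
    (hβG : (3 / 4 : ℝ) * G.card ≤ ∑ b ∈ G, β b)
    (hβBpos : 0 < ∑ b ∈ B, β b)
    (v : ι → ℝ) (hv : ∀ b ∈ B, 0 ≤ v b)
    (m m' : ℝ) (hm : 0 ≤ m) (hm' : 0 ≤ m')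
    (σ : ℝ) (hσ : 0 < σ) (hmm' : |m - m'| ≤ σ)
    (C : ℝ) (hC : 1 ≤ C) (c₂ : ℝ) (hc₂ : 0 < c₂) (c₃ : ℝ) (hc₃ : 0 < c₃)
    (n : ℝ)
    (hn : max (1024 * c₃ * c₂ * C * Real.log (2 / α) ^ 2 / α) (256 * c₂ * C) ≤ n)
    (hmsd : (G.card : ℝ)⁻¹ * ∑ b ∈ G, (v b - m) ^ 2 ≤ c₂ * (σ ^ 2 + C * m ^ 2) / n)
    (hvar : ∑ b ∈ B, (β b / ∑ a ∈ B, β a) *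
          (v b - ∑ a ∈ B, (β a / ∑ c ∈ B, β c) * v a) ^ 2 ≤
        c₃ * Real.log (2 / α) ^ 2 *
          ((c₂ / n) * (σ ^ 2 +
            ((8 * Real.sqrt C / 7) *
                sInf {t : ℝ | ∑ b ∈ B.filter (fun b => t ≤ v b), β b ≤ α * B.card / 4} +
              σ / 7) ^ 2))) :
    (3 / 4) * m' - σ ≤ ∑ b ∈ B, (β b / ∑ a ∈ B, β a) * v b ∧
      ∑ b ∈ B, (β b / ∑ a ∈ B, β a) * v b ≤ (4 / 3) * m' + 2 * σ := by
  have hσ0 : (0:ℝ) ≤ σ := hσ.le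
  have hBne : B.Nonempty := ⟨hGne.choose, hGB hGne.choose_spec⟩
  have hG0 : (0:ℝ) < G.card := by exact_mod_cast hGne.card_pos
  have hB0 : (0:ℝ) < B.card := by exact_mod_cast hBne.card_pos
  have hC0 : (0:ℝ) < C := lt_of_lt_of_le one_pos hC
  have hn0 : (0:ℝ) < n := lt_of_lt_of_le (by positivity) ((le_max_right _ _).trans hn)
  set L := Real.log (2 / α) with hLdef
  set u := Real.sqrt C with hudef
  set S := ∑ b ∈ B, β b with hSdef
  set μ := ∑ b ∈ B, (β b / S) * v b with hμdef
  set V := ∑ b ∈ B, (β b / S) * (v b - μ) ^ 2 with hVdef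
  set Θ := {t : ℝ | ∑ b ∈ B.filter (fun b => t ≤ v b), β b ≤ α * B.card / 4} with hΘdef
  set θ := sInf Θ with hθdef
  set T := 8 * u / 7 * θ + σ / 7 with hTdef
  clear_value T
  clear_value θ
  clear_value Θ
  clear_value V
  clear_value μ
  clear_value S
  clear_value u
  clear_value L
  have hL0 : 0 < L := by
    rw [hLdef]
    exact Real.log_pos (by rw [lt_div_iff₀ hα0]; linarith only [hα1])
  have hu1 : 1 ≤ u := by
    rw [hudef, show (1:ℝ) = Real.sqrt 1 by simp]
    exact Real.sqrt_le_sqrt hC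
  have hu0 : 0 < u := lt_of_lt_of_le one_pos hu1
  have hu2 : u ^ 2 = C := by rw [hudef]; exact Real.sq_sqrt hC0.le
  have hSpos : 0 < S := hβBpos
  have hSne : S ≠ 0 := hSpos.ne'
  have hV0 : 0 ≤ V := by
    rw [hVdef]
    exact Finset.sum_nonneg fun b hb =>
      mul_nonneg (div_nonneg (hβ b hb).1 hSpos.le) (sq_nonneg _)
  have hμ0 : 0 ≤ μ := by
    rw [hμdef]
    exact Finset.sum_nonneg fun b hb =>
      mul_nonneg (div_nonneg (hβ b hb).1 hSpos.le) (hv b hb)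
  have hSV : ∑ b ∈ B, β b * (v b - μ) ^ 2 = S * V := by
    rw [hVdef, Finset.mul_sum]
    refine Finset.sum_congr rfl fun b hb => ?_
    field_simp
  have hScard : S ≤ (B.card : ℝ) := by
    rw [hSdef]
    calc (∑ b ∈ B, β b) ≤ ∑ _b ∈ B, (1:ℝ) := Finset.sum_le_sum fun b hb => (hβ b hb).2
    _ = B.card := by simp
  have hSG : (3/4 : ℝ) * G.card ≤ S := by
    rw [hSdef]
    exact hβG.trans (Finset.sum_le_sum_of_subset_of_nonneg hGB fun b hb _ => (hβ b hb).1)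
  -- every element of Θ is nonnegative
  have hmem_pos : ∀ t ∈ Θ, (0:ℝ) ≤ t := by
    intro t ht
    by_contra h
    push_neg at h
    rw [hΘdef, Set.mem_setOf_eq,
      Finset.filter_true_of_mem (fun b hb => (h.le.trans (hv b hb)))] at ht
    rw [← hSdef] at ht
    have hαBpos : 0 < α * B.card := mul_pos hα0 hB0
    linarith only [hSG, hαB, hαBpos, ht]
  have hbdd : BddBelow Θ := ⟨0, fun t ht => hmem_pos t ht⟩
  have hθ0 : 0 ≤ θ := (Real.sInf_nonneg hmem_pos).trans_eq hθdef.symm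
  have hTσ : σ / 7 ≤ T := by
    have h8 : 0 ≤ 8 * u / 7 * θ := by positivity
    rw [hTdef]
    linarith only [h8]
  have hT0 : 0 ≤ T := by linarith only [hTσ, hσ]
  -- r := sqrt(V/α)
  set r := Real.sqrt (V / α) with hrdef
  clear_value r
  have hr0 : 0 ≤ r := by rw [hrdef]; exact Real.sqrt_nonneg _
  have hr2 : r ^ 2 = V / α := by rw [hrdef]; exact Real.sq_sqrt (div_nonneg hV0 hα0.le)
  have hVr : V = α * r ^ 2 := by rw [hr2]; field_simp
  -- Chebyshev for the threshold: θ ≤ μ + 2r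
  have hθle : θ ≤ μ + 2 * r := by
    refine le_of_forall_pos_le_add fun ε hε => ?_
    have hc : 0 < 2 * r + ε := by linarith only [hr0, hε]
    have hmem : (μ + 2 * r + ε) ∈ Θ := by
      rw [hΘdef, Set.mem_setOf_eq]
      have key : ∀ b ∈ B.filter (fun b => μ + 2 * r + ε ≤ v b),
          β b * (2 * r + ε) ^ 2 ≤ β b * (v b - μ) ^ 2 := by
        intro b hb
        rw [Finset.mem_filter] at hb
        have h1 : 2 * r + ε ≤ v b - μ := by linarith only [hb.2]
        exact mul_le_mul_of_nonneg_left (pow_le_pow_left₀ hc.le h1 2) (hβ b hb.1).1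
      have h2 : (∑ b ∈ B.filter (fun b => μ + 2 * r + ε ≤ v b), β b) * (2 * r + ε) ^ 2
          ≤ S * V := by
        rw [Finset.sum_mul, ← hSV]
        refine (Finset.sum_le_sum key).trans ?_
        exact Finset.sum_le_sum_of_subset_of_nonneg (Finset.filter_subset _ _)
          (fun b hb _ => mul_nonneg (hβ b hb).1 (sq_nonneg _))
      have h3 : S * V ≤ α * B.card / 4 * (2 * r + ε) ^ 2 := by
        rw [hVr]
        have h4 : S * (α * r ^ 2) ≤ (B.card : ℝ) * (α * r ^ 2) :=
          mul_le_mul_of_nonneg_right hScard (by positivity)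
        nlinarith only [h4, mul_nonneg (mul_nonneg hα0.le hB0.le) (mul_nonneg hr0 hε.le),
          mul_nonneg (mul_nonneg hα0.le hB0.le) (sq_nonneg ε)]
      exact le_of_mul_le_mul_right (h2.trans h3) (by positivity)
    exact hθdef.trans_le ((csInf_le hbdd hmem).trans (by linarith only []))
  -- the variance bound: 1024 C V ≤ α (σ² + T²)
  have hF1 : 1024 * C * V ≤ α * (σ ^ 2 + T ^ 2) := by
    have h1 : 1024 * c₃ * c₂ * C * L ^ 2 ≤ n * α := by
      have h0 := (le_max_left (1024 * c₃ * c₂ * C * L ^ 2 / α) (256 * c₂ * C)).trans hn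
      rwa [div_le_iff₀ hα0] at h0
    have hA : V * n ≤ c₃ * L ^ 2 * c₂ * (σ ^ 2 + T ^ 2) := by
      have h2 : V ≤ c₃ * L ^ 2 * c₂ * (σ ^ 2 + T ^ 2) / n := by
        calc V ≤ c₃ * L ^ 2 * (c₂ / n * (σ ^ 2 + T ^ 2)) := hvar
        _ = c₃ * L ^ 2 * c₂ * (σ ^ 2 + T ^ 2) / n := by ring
      exact (le_div_iff₀ hn0).mp h2
    have hP0 : (0:ℝ) ≤ σ ^ 2 + T ^ 2 := by positivity
    have h5 : (1024 * C) * (V * n) ≤ (1024 * C) * (c₃ * L ^ 2 * c₂ * (σ ^ 2 + T ^ 2)) :=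
      mul_le_mul_of_nonneg_left hA (by positivity)
    have h6 : (1024 * c₃ * c₂ * C * L ^ 2) * (σ ^ 2 + T ^ 2) ≤ (n * α) * (σ ^ 2 + T ^ 2) :=
      mul_le_mul_of_nonneg_right h1 hP0
    have h7 : (1024 * C * V) * n ≤ (α * (σ ^ 2 + T ^ 2)) * n := by linarith only [h5, h6]
    exact le_of_mul_le_mul_right h7 hn0
  -- r ≤ (σ + T)/(32 u)
  have hσT : 0 ≤ σ + T := by linarith only [hσ0, hT0]
  have hrT : r ≤ (σ + T) / (32 * u) := by
    have e1 : ((σ + T) / (32 * u)) ^ 2 = (σ + T) ^ 2 / (1024 * C) := by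
      rw [div_pow, mul_pow, hu2]; norm_num
    have h1 : V / α ≤ ((σ + T) / (32 * u)) ^ 2 := by
      rw [e1, div_le_div_iff₀ hα0 (by positivity)]
      nlinarith only [hF1, mul_nonneg hα0.le (mul_nonneg hσ0 hT0)]
    calc r = Real.sqrt (V / α) := hrdef
    _ ≤ Real.sqrt (((σ + T) / (32 * u)) ^ 2) := Real.sqrt_le_sqrt h1
    _ = (σ + T) / (32 * u) := Real.sqrt_sq (by positivity)
  -- T ≤ (16u/13) μ + (3/13) σ
  have hTle : T ≤ 16 * u / 13 * μ + 3 / 13 * σ := by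
    have e2 : 8 * u / 7 * θ ≤ 8 * u / 7 * μ + 16 * u / 7 * r := by
      have := mul_le_mul_of_nonneg_left hθle (show (0:ℝ) ≤ 8 * u / 7 by positivity)
      linarith only [this]
    have e3 : 16 * u / 7 * r ≤ (σ + T) / 14 := by
      calc 16 * u / 7 * r ≤ 16 * u / 7 * ((σ + T) / (32 * u)) :=
        mul_le_mul_of_nonneg_left hrT (by positivity)
      _ = (σ + T) / 14 := by field_simp; ring
    rw [hTdef]
    rw [hTdef] at e3
    linarith only [e2, e3]
  -- r ≤ σ/26 + μ/26
  have hrμ : r ≤ σ / 26 + μ / 26 := by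
    have h1 : (σ + T) / (32 * u) ≤ (16 / 13 * σ + 16 * u / 13 * μ) / (32 * u) := by
      refine (div_le_div_iff_of_pos_right (by positivity)).2 ?_
      linarith only [hTle]
    have h2 : (16 / 13 * σ + 16 * u / 13 * μ) / (32 * u) = σ / (26 * u) + μ / 26 := by
      field_simp; ring
    have h3 : σ / (26 * u) ≤ σ / 26 := by
      rw [div_le_div_iff₀ (by positivity) (by norm_num)]
      nlinarith only [mul_nonneg hσ0 (show (0:ℝ) ≤ u - 1 by linarith only [hu1])]
    linarith only [hrT, h1, h2.le, h3]
  -- the sample deviation bound: 2·sq ≤ m/8 + σ/8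
  set sq := Real.sqrt (c₂ * (σ ^ 2 + C * m ^ 2) / n) with hsqdef
  clear_value sq
  have hsq0 : 0 ≤ sq := by rw [hsqdef]; exact Real.sqrt_nonneg _
  have hsq2 : sq ^ 2 = c₂ * (σ ^ 2 + C * m ^ 2) / n := by
    rw [hsqdef]; exact Real.sq_sqrt (by positivity)
  have hs : 2 * sq ≤ m / 8 + σ / 8 := by
    have h256 : 256 * c₂ * C ≤ n := (le_max_right _ _).trans hn
    have e1 : ((σ + u * m) / (16 * u)) ^ 2 = (σ + u * m) ^ 2 / (256 * C) := by
      rw [div_pow, mul_pow, hu2]; norm_num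
    have hDle : c₂ * (σ ^ 2 + C * m ^ 2) / n ≤ ((σ + u * m) / (16 * u)) ^ 2 := by
      rw [e1, div_le_div_iff₀ hn0 (by positivity)]
      have hP : (0:ℝ) ≤ σ ^ 2 + C * m ^ 2 := by positivity
      have key : c₂ * (σ ^ 2 + C * m ^ 2) * (256 * C) ≤ (σ ^ 2 + C * m ^ 2) * n := by
        linarith only [mul_le_mul_of_nonneg_right h256 hP]
      have h9 : σ ^ 2 + C * m ^ 2 ≤ (σ + u * m) ^ 2 := by
        rw [← hu2]
        nlinarith only [mul_nonneg hσ0 (mul_nonneg hu0.le hm)]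
      have key2 : (σ ^ 2 + C * m ^ 2) * n ≤ (σ + u * m) ^ 2 * n :=
        mul_le_mul_of_nonneg_right h9 hn0.le
      linarith only [key, key2]
    have hsqrt : sq ≤ (σ + u * m) / (16 * u) := by
      calc sq = Real.sqrt (c₂ * (σ ^ 2 + C * m ^ 2) / n) := hsqdef
      _ ≤ Real.sqrt (((σ + u * m) / (16 * u)) ^ 2) := Real.sqrt_le_sqrt hDle
      _ = (σ + u * m) / (16 * u) := Real.sqrt_sq (by positivity)
    have e2 : (σ + u * m) / (16 * u) = σ / (16 * u) + m / 16 := by field_simp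
    have e3 : σ / (16 * u) ≤ σ / 16 := by
      rw [div_le_div_iff₀ (by positivity) (by norm_num)]
      nlinarith only [mul_nonneg hσ0 (show (0:ℝ) ≤ u - 1 by linarith only [hu1])]
    linarith only [hsqrt, e2.le, e3]
  -- Chebyshev on G
  have hmsd' : ∑ b ∈ G, (v b - m) ^ 2 ≤ (G.card : ℝ) * (c₂ * (σ ^ 2 + C * m ^ 2) / n) := by
    have h := mul_le_mul_of_nonneg_left hmsd hG0.le
    rwa [← mul_assoc, mul_inv_cancel₀ hG0.ne', one_mul] at h
  have hGbad : ∑ b ∈ G.filter (fun b => 2 * sq ≤ |v b - m|), β b ≤ (G.card : ℝ) / 4 := by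
    have hterm : ∀ b ∈ G.filter (fun b => 2 * sq ≤ |v b - m|),
        β b * (2 * sq) ^ 2 ≤ (v b - m) ^ 2 := by
      intro b hb
      rw [Finset.mem_filter] at hb
      have h1 : (2 * sq) ^ 2 ≤ (v b - m) ^ 2 := by
        rw [← sq_abs (v b - m)]
        exact pow_le_pow_left₀ (by positivity) hb.2 2
      have hb1 := hβ b (hGB hb.1)
      nlinarith only [h1, mul_nonneg (sub_nonneg.2 hb1.2) (sq_nonneg (2 * sq))]
    have h2 : (∑ b ∈ G.filter (fun b => 2 * sq ≤ |v b - m|), β b) * (2 * sq) ^ 2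
        ≤ ∑ b ∈ G, (v b - m) ^ 2 := by
      rw [Finset.sum_mul]
      refine (Finset.sum_le_sum hterm).trans ?_
      exact Finset.sum_le_sum_of_subset_of_nonneg (Finset.filter_subset _ _)
        (fun b hb _ => sq_nonneg _)
    have h3 := h2.trans hmsd'
    have hX : 0 < c₂ * (σ ^ 2 + C * m ^ 2) / n := by positivity
    have e4 : (2 * sq) ^ 2 = 4 * (c₂ * (σ ^ 2 + C * m ^ 2) / n) := by
      rw [mul_pow, hsq2]; ring
    rw [e4] at h3
    nlinarith only [h3, hX]
  have hsplit : ∑ b ∈ G.filter (fun b => 2 * sq ≤ |v b - m|), β b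
      + ∑ b ∈ G.filter (fun b => ¬ 2 * sq ≤ |v b - m|), β b = ∑ b ∈ G, β b :=
    Finset.sum_filter_add_sum_filter_not G _ β
  have hW : (G.card : ℝ) / 2 ≤ ∑ b ∈ G.filter (fun b => ¬ 2 * sq ≤ |v b - m|), β b := by
    linarith only [hβG, hGbad, hsplit]
  have hSα : S * α ≤ (G.card : ℝ) := by
    linarith only [mul_le_mul_of_nonneg_right hScard hα0.le, hαB]
  -- |μ - m| ≤ 2 sq + (3/2) r
  have hμm : |μ - m| ≤ 2 * sq + 3 / 2 * r := by
    rcases le_or_gt (|μ - m|) (2 * sq) with h | h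
    · linarith only [h, hr0]
    · have hd0 : 0 < |μ - m| - 2 * sq := by linarith only [h]
      have hterm : ∀ b ∈ G.filter (fun b => ¬ 2 * sq ≤ |v b - m|),
          β b * (|μ - m| - 2 * sq) ^ 2 ≤ β b * (v b - μ) ^ 2 := by
        intro b hb
        rw [Finset.mem_filter] at hb
        have t1 : |μ - m| ≤ |μ - v b| + |v b - m| := abs_sub_le μ (v b) m
        have t2 : |v b - m| < 2 * sq := not_le.mp hb.2
        have t3 : |μ - v b| = |v b - μ| := abs_sub_comm _ _
        have h1 : |μ - m| - 2 * sq ≤ |v b - μ| := by linarith only [t1, t2, t3.le, t3.ge]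
        have h2 : (|μ - m| - 2 * sq) ^ 2 ≤ (v b - μ) ^ 2 := by
          rw [← sq_abs (v b - μ)]
          exact pow_le_pow_left₀ hd0.le h1 2
        exact mul_le_mul_of_nonneg_left h2 (hβ b (hGB hb.1)).1
      have hsum : (∑ b ∈ G.filter (fun b => ¬ 2 * sq ≤ |v b - m|), β b)
          * (|μ - m| - 2 * sq) ^ 2 ≤ S * V := by
        rw [Finset.sum_mul, ← hSV]
        refine (Finset.sum_le_sum hterm).trans ?_
        exact Finset.sum_le_sum_of_subset_of_nonneg
          ((Finset.filter_subset _ _).trans hGB)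
          (fun b hb _ => mul_nonneg (hβ b hb).1 (sq_nonneg _))
      have st1 : (G.card : ℝ) / 2 * (|μ - m| - 2 * sq) ^ 2
          ≤ (∑ b ∈ G.filter (fun b => ¬ 2 * sq ≤ |v b - m|), β b)
            * (|μ - m| - 2 * sq) ^ 2 :=
        mul_le_mul_of_nonneg_right hW (sq_nonneg _)
      have st2 : S * V ≤ (G.card : ℝ) * r ^ 2 := by
        rw [hVr]
        linarith only [mul_le_mul_of_nonneg_right hSα (sq_nonneg r)]
      have hd2 : (|μ - m| - 2 * sq) ^ 2 ≤ 2 * r ^ 2 := by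
        nlinarith only [st1, hsum, st2, hG0]
      nlinarith only [hd2, hd0, hr0]
  -- conclude |μ - m| ≤ (m + σ)/4
  have hμm' : |μ - m| ≤ (m + σ) / 4 := by
    have h1 : μ - m ≤ |μ - m| := le_abs_self _
    linarith only [hμm, hs, hrμ, h1, hm, hσ]
  have h2 := abs_le.mp hmm'
  have h3 := abs_le.mp hμm'
  constructor
  · linarith only [h3.1, h2.1, hσ0, hm']
  · linarith only [h3.2, h2.2, hm', hσ0]
end

section
/- Let κ > 0, let J be a finite set, p : J → ℝ_{≥0} with Σ_{j∈J} p_j = 1, and r : J → ℝ. Then Σ_{j∈J} p_j·Huber_κ(r_j) ≥ (1/2)·( Σ_{j∈J} p_j·|r_j|·1{|r_j| ≤ κ} )² + (κ/2)·Σ_{j∈J} p_j·|r_j|·1{|r_j| > κ}. -/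
/-- The Huber (clipped) loss with clipping parameter `κ`. -/
noncomputable def huber (κ r : ℝ) : ℝ :=
  if |r| ≤ κ then r ^ 2 / 2 else κ * |r| - κ ^ 2 / 2

/-- For any probability weights `p` on a finite set and residuals `r`,
`Σ p_j·Huber_κ(r_j) ≥ (1/2)(Σ p_j |r_j| 1{|r_j| ≤ κ})² + (κ/2)·Σ p_j |r_j| 1{|r_j| > κ}`. -/
theorem stmt10 (κ : ℝ) (hκ : 0 < κ) {J : Type*} (Jf : Finset J) (p : J → ℝ)
    (hp0 : ∀ j ∈ Jf, 0 ≤ p j) (hp1 : ∑ j ∈ Jf, p j = 1) (r : J → ℝ) :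
    (1 / 2) * (∑ j ∈ Jf, p j * (if |r j| ≤ κ then |r j| else 0)) ^ 2 +
        (κ / 2) * ∑ j ∈ Jf, p j * (if κ < |r j| then |r j| else 0) ≤
      ∑ j ∈ Jf, p j * huber κ (r j) := by
  set a : J → ℝ := fun j => if |r j| ≤ κ then |r j| else 0 with ha
  set b : J → ℝ := fun j => if κ < |r j| then |r j| else 0 with hb
  have key : (∑ j ∈ Jf, p j * a j) ^ 2 ≤ ∑ j ∈ Jf, p j * a j ^ 2 := by
    have h := Finset.sum_sq_le_sum_mul_sum_of_sq_eq_mul Jf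
      (r := fun j => p j * a j) (f := p) (g := fun j => p j * a j ^ 2)
      hp0 (fun j hj => mul_nonneg (hp0 j hj) (sq_nonneg _)) (fun j hj => by ring)
    simpa [hp1] using h
  have step : ∑ j ∈ Jf, (p j * a j ^ 2 / 2 + κ / 2 * (p j * b j)) ≤
      ∑ j ∈ Jf, p j * huber κ (r j) := by
    apply Finset.sum_le_sum
    intro j hj
    have hpj := hp0 j hj
    by_cases h : |r j| ≤ κ
    · have h1 : a j = |r j| := if_pos h
      have h2 : b j = 0 := if_neg (not_lt.2 h)
      rw [h1, h2, huber, if_pos h, sq_abs]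
      ring_nf
      exact le_refl _
    · push_neg at h
      have h1 : a j = 0 := if_neg (not_le.2 h)
      have h2 : b j = |r j| := if_pos h
      rw [h1, h2, huber, if_neg (not_le.2 h)]
      nlinarith [mul_nonneg hpj (mul_nonneg hκ.le (sub_nonneg.2 h.le))]
  have sumsplit : ∑ j ∈ Jf, (p j * a j ^ 2 / 2 + κ / 2 * (p j * b j)) =
      (∑ j ∈ Jf, p j * a j ^ 2) / 2 + κ / 2 * ∑ j ∈ Jf, p j * b j := by
    rw [Finset.sum_add_distrib, Finset.sum_div, ← Finset.mul_sum]
  rw [sumsplit] at step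
  simp only [ha, hb] at key step
  nlinarith [key]
end

section
/- Let S be a finite nonempty index set, x : S → ℝ^d, let Σ be a symmetric positive-semidefinite d×d matrix with ⟨u, Σu⟩ ≤ ‖u‖² for all u ∈ ℝ^d, let θ ≥ 1, C ≥ 1, and a ≥ 0. Suppose: (i) for every subset T ⊆ S with |T| ≥ (1 − 1/θ²)·|S| and every u ∈ ℝ^d, ⟨u, Σu⟩ − a·‖u‖² ≤ (1/|T|)·Σ_{j∈T} ⟨x_j, u⟩²; and (ii) for every u ∈ ℝ^d, (1/|S|)·Σ_{j∈S} ⟨x_j, u⟩² ≤ ⟨u, Σu⟩ + a·‖u‖². Then for every subset S′ ⊆ S with |S′| ≤ |S|/θ² and every unit vector u ∈ ℝ^d, Σ_{j∈S′} ⟨x_j, u⟩² ≤ |S|·(1/θ² + 2a). -/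
/-!
Remove the small set `S'` from `S`: the complement `T = S \ S'` is large, so its second
moment in direction `u` is at least `|T|(q - a)` with `q = ⟨u, Σu⟩`, while the whole of `S`
has second moment at most `|S|(q + a)`. Subtracting leaves at most `|S'| q + 2|S| a` for `S'`,
and `q ≤ 1` together with `|S'| ≤ |S|/θ²` finishes.
-/

open scoped RealInnerProductSpace

namespace Finset

variable {ι : Type*}

theorem card_mul_inv_card_mul_sum (s : Finset ι) (f : ι → ℝ) :
    (#s : ℝ) * ((#s : ℝ)⁻¹ * ∑ i ∈ s, f i) = ∑ i ∈ s, f i := by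
  rcases s.eq_empty_or_nonempty with rfl | hs
  · simp
  · exact mul_inv_cancel_left₀ (by exact_mod_cast hs.card_ne_zero) _

theorem card_mul_le_sum_of_le_average {s : Finset ι} {f : ι → ℝ} {c : ℝ}
    (h : c ≤ (#s : ℝ)⁻¹ * ∑ i ∈ s, f i) : (#s : ℝ) * c ≤ ∑ i ∈ s, f i :=
  card_mul_inv_card_mul_sum s f ▸ mul_le_mul_of_nonneg_left h (Nat.cast_nonneg _)

theorem sum_le_card_mul_of_average_le {s : Finset ι} {f : ι → ℝ} {c : ℝ}
    (h : (#s : ℝ)⁻¹ * ∑ i ∈ s, f i ≤ c) : ∑ i ∈ s, f i ≤ (#s : ℝ) * c :=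
  card_mul_inv_card_mul_sum s f ▸ mul_le_mul_of_nonneg_left h (Nat.cast_nonneg _)

variable [DecidableEq ι]

theorem one_sub_inv_mul_card_le_card_sdiff {s t : Finset ι} (h : s ⊆ t) {r : ℝ}
    (hs : (#s : ℝ) ≤ #t / r) : (1 - 1 / r) * #t ≤ #(t \ s) := by
  rw [cast_card_sdiff h]
  linarith [div_eq_mul_one_div (#t : ℝ) r]

theorem sum_subset_le_of_sum_sdiff_ge {s t : Finset ι} (h : s ⊆ t) {f : ι → ℝ} {q a : ℝ}
    (ha : 0 ≤ a) (hlow : (#(t \ s) : ℝ) * (q - a) ≤ ∑ i ∈ t \ s, f i)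
    (hup : ∑ i ∈ t, f i ≤ #t * (q + a)) :
    ∑ i ∈ s, f i ≤ #s * q + 2 * #t * a := by
  have hsplit := sum_sdiff (f := f) h
  have hcard : (#(t \ s) : ℝ) ≤ #t := by exact_mod_cast card_le_card sdiff_subset
  rw [cast_card_sdiff h] at hlow hcard
  nlinarith

end Finset

theorem stmt16_general {d : ℕ} {ι : Type*} (S : Finset ι)
    (x : ι → EuclideanSpace ℝ (Fin d))
    (Sig : Matrix (Fin d) (Fin d) ℝ)
    (hSigle : ∀ u : EuclideanSpace ℝ (Fin d), ⟪u, Matrix.toEuclideanLin Sig u⟫ ≤ ‖u‖ ^ 2)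
    (θ a : ℝ) (ha : 0 ≤ a)
    (hlow : ∀ T : Finset ι, T ⊆ S → (1 - 1 / θ ^ 2) * S.card ≤ T.card →
      ∀ u : EuclideanSpace ℝ (Fin d),
        ⟪u, Matrix.toEuclideanLin Sig u⟫ - a * ‖u‖ ^ 2 ≤
          (T.card : ℝ)⁻¹ * ∑ j ∈ T, ⟪x j, u⟫ ^ 2)
    (hup : ∀ u : EuclideanSpace ℝ (Fin d),
      (S.card : ℝ)⁻¹ * ∑ j ∈ S, ⟪x j, u⟫ ^ 2 ≤
        ⟪u, Matrix.toEuclideanLin Sig u⟫ + a * ‖u‖ ^ 2) :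
    ∀ S' : Finset ι, S' ⊆ S → (S'.card : ℝ) ≤ (S.card : ℝ) / θ ^ 2 →
      ∀ u : EuclideanSpace ℝ (Fin d), ‖u‖ = 1 →
        ∑ j ∈ S', ⟪x j, u⟫ ^ 2 ≤ (S.card : ℝ) * (1 / θ ^ 2 + 2 * a) := by
  classical
  intro S' hsub hcard u hu
  set q := ⟪u, Matrix.toEuclideanLin Sig u⟫
  have hq : q ≤ 1 := by simpa [hu] using hSigle u
  have hT := hlow (S \ S') Finset.sdiff_subset
    (Finset.one_sub_inv_mul_card_le_card_sdiff hsub hcard) u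
  have hS := hup u
  rw [hu, one_pow, mul_one] at hT hS
  have key := Finset.sum_subset_le_of_sum_sdiff_ge hsub ha
    (Finset.card_mul_le_sum_of_le_average hT) (Finset.sum_le_card_mul_of_average_le hS)
  have hq' : (S'.card : ℝ) * q ≤ S.card / θ ^ 2 :=
    (mul_le_of_le_one_right (Nat.cast_nonneg _) hq).trans hcard
  linarith [div_eq_mul_one_div (S.card : ℝ) (θ ^ 2)]

/-- Let `Sig` be a symmetric PSD matrix with `⟨u, Sig u⟩ ≤ ‖u‖²` for all
`u`. If the empirical second moments of `x` on every large subset `T` of `S` dominate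
`⟨u, Sig u⟩ − a‖u‖²`, and on `S` itself are dominated by `⟨u, Sig u⟩ + a‖u‖²`, then for any
small subset `S′` (of size at most `|S|/θ²`) and any unit vector `u`,
`Σ_{j∈S′} ⟨x_j, u⟩² ≤ |S|(1/θ² + 2a)`. -/
theorem stmt16 {d : ℕ} {ι : Type*} (S : Finset ι) (hS : S.Nonempty)
    (x : ι → EuclideanSpace ℝ (Fin d))
    (Sig : Matrix (Fin d) (Fin d) ℝ) (hSigsymm : Sig.IsSymm) (hSigpsd : Sig.PosSemidef)
    (hSigle : ∀ u : EuclideanSpace ℝ (Fin d), ⟪u, Matrix.toEuclideanLin Sig u⟫ ≤ ‖u‖ ^ 2)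
    (θ C a : ℝ) (hθ : 1 ≤ θ) (hC : 1 ≤ C) (ha : 0 ≤ a)
    (hlow : ∀ T : Finset ι, T ⊆ S → (1 - 1 / θ ^ 2) * S.card ≤ T.card →
      ∀ u : EuclideanSpace ℝ (Fin d),
        ⟪u, Matrix.toEuclideanLin Sig u⟫ - a * ‖u‖ ^ 2 ≤
          (T.card : ℝ)⁻¹ * ∑ j ∈ T, ⟪x j, u⟫ ^ 2)
    (hup : ∀ u : EuclideanSpace ℝ (Fin d),
      (S.card : ℝ)⁻¹ * ∑ j ∈ S, ⟪x j, u⟫ ^ 2 ≤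
        ⟪u, Matrix.toEuclideanLin Sig u⟫ + a * ‖u‖ ^ 2) :
    ∀ S' : Finset ι, S' ⊆ S → (S'.card : ℝ) ≤ (S.card : ℝ) / θ ^ 2 →
      ∀ u : EuclideanSpace ℝ (Fin d), ‖u‖ = 1 →
        ∑ j ∈ S', ⟪x j, u⟫ ^ 2 ≤ (S.card : ℝ) * (1 / θ ^ 2 + 2 * a) :=
  stmt16_general S x Sig hSigle θ a ha hlow hup
end
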